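/- arXiv:1102.5578 — 8 statements merged into one kernel-verified Lean document; each statement's English description precedes it below -/
import Mathlib

section
/- Every locally finite group G embeds into an existentially closed locally finite group H. (Hence existentially closed locally finite groups of every infinite cardinality ≥ |G| exist.) -/
universe u

/-- A group is locally finite if every finitely generated subgroup is finite. -/
def IsLocallyFiniteGroup (G : Type*) [Group G] : Prop :=
  ∀ s : Finset G, (Subgroup.closure (s : Set G) : Set G).Finite

/-- A locally finite group `H` is existentially closed if for all finite groups
`K ⊆ L` and every embedding of `K` into `H`, the embedding extends to an
embedding of `L` into `H`. -/
def IsExistentiallyClosedLF (H : Type*) [Group H] : Prop :=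
  IsLocallyFiniteGroup H ∧
  ∀ (K L : Type) [Group K] [Group L] [Finite L] (i : K →* L),
    Function.Injective i →
    ∀ f : K →* H, Function.Injective f →
      ∃ g : L →* H, Function.Injective g ∧ ∀ x, g (i x) = f x

/-!
Hall's construction. For a group `N`, the permutations `σ` of `N` whose multipliers `σ x * x⁻¹`
lie in a finitely generated subgroup form a group `P(N)` into which `N` embeds by left
multiplication. If `N` is locally finite then so is `P(N)`: finitely many such permutations have
all multipliers in one finite subgroup `F`, so they preserve the right cosets of `F`, and on each
coset they act according to one of finitely many patterns.

If `K ≤ L` are finite, `φ : K ↪ N`, and `F ≥ φ K` is finite with `|L|` dividing `|F|`, then as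
left `K`-sets `F ≅ L × Fin m` and `N ≅ F × Ω`; transporting the left action of `L` on itself along
these bijections embeds `L` in `P(N)` extending `φ`. Iterating `N ↦ P(N) × Sym(n)` (the symmetric
groups supply the divisibility) and taking the union gives the required group.
-/

universe v

open CategoryTheory Function

namespace IsLocallyFiniteGroup

variable {G H : Type*} [Group G] [Group H]

theorem finite_closure (hG : IsLocallyFiniteGroup G) {s : Set G} (hs : s.Finite) :
    (Subgroup.closure s : Set G).Finite := by
  simpa using hG hs.toFinset

theorem of_finite [Finite G] : IsLocallyFiniteGroup G :=
  fun _ => Set.toFinite _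

theorem prod (hG : IsLocallyFiniteGroup G) (hH : IsLocallyFiniteGroup H) :
    IsLocallyFiniteGroup (G × H) := by
  intro s
  have hle : Subgroup.closure (s : Set (G × H)) ≤
      (Subgroup.closure (Prod.fst '' s)).prod (Subgroup.closure (Prod.snd '' s)) :=
    (Subgroup.closure_le _).mpr fun x hx =>
      ⟨Subgroup.subset_closure ⟨x, hx, rfl⟩, Subgroup.subset_closure ⟨x, hx, rfl⟩⟩
  refine Set.Finite.subset ?_ hle
  rw [Subgroup.coe_prod]
  exact (hG.finite_closure (s.finite_toSet.image _)).prod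
    (hH.finite_closure (s.finite_toSet.image _))

theorem finite_closure_of_subset_range (hH : IsLocallyFiniteGroup H) (φ : H →* G) {s : Finset G}
    (hsφ : ↑s ⊆ Set.range φ) : (Subgroup.closure (s : Set G) : Set G).Finite := by
  classical
  obtain ⟨s', -, rfl⟩ := Finset.subset_set_image_iff.mp (Set.image_univ ▸ hsφ)
  rw [Finset.coe_image, ← MonoidHom.map_closure, Subgroup.coe_map]
  exact (hH s').image φ

theorem exists_finite_subgroup_card_dvd (hG : IsLocallyFiniteGroup G) {s : Set G} (hs : s.Finite)
    [Finite H] (φ : H →* G) (hφ : Injective φ) :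
    ∃ F : Subgroup G, Finite F ∧ s ⊆ F ∧ Nat.card H ∣ Nat.card F := by
  refine ⟨Subgroup.closure (s ∪ Set.range φ),
    (hG.finite_closure (hs.union (Set.finite_range φ))).to_subtype,
    Subgroup.subset_closure.trans' Set.subset_union_left, ?_⟩
  rw [Nat.card_congr (MonoidHom.ofInjective hφ).toEquiv]
  exact Subgroup.card_dvd_of_le fun x hx => Subgroup.subset_closure (Or.inr hx)

end IsLocallyFiniteGroup

namespace GrpCat

variable {X : ℕ → GrpCat.{u}} (t : ∀ n, X n ⟶ X (n + 1))

def seqMap (i j : ℕ) (h : i ≤ j) : X i →* X j :=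
  ((Functor.ofSequence t).map (homOfLE h)).hom

theorem seqMap_self (i : ℕ) : seqMap t i i le_rfl = MonoidHom.id _ := by
  simp only [seqMap, homOfLE_refl, CategoryTheory.Functor.map_id, GrpCat.hom_id]
  rfl

theorem seqMap_trans {i j k : ℕ} (hij : i ≤ j) (hjk : j ≤ k) :
    (seqMap t j k hjk).comp (seqMap t i j hij) = seqMap t i k (hij.trans hjk) := by
  rw [seqMap, seqMap, seqMap, ← homOfLE_comp hij hjk, CategoryTheory.Functor.map_comp]
  rfl

theorem seqMap_succ (n : ℕ) : seqMap t n (n + 1) n.le_succ = (t n).hom := by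
  rw [seqMap, Functor.ofSequence_map_homOfLE_succ]
  rfl

instance : DirectedSystem (fun n => X n) (seqMap t · · ·) where
  map_self _ x := by rw [seqMap_self, MonoidHom.id_apply]
  map_map _ _ _ hij hjk x := by rw [← seqMap_trans t hij hjk, MonoidHom.comp_apply]

abbrev SeqColim : Type u := DirectLimit (fun n => X n) (seqMap t)

namespace SeqColim

def of (n : ℕ) : X n →* SeqColim t where
  toFun x := ⟦⟨n, x⟩⟧
  map_one' := (DirectLimit.one_def (f := seqMap t) n).symm
  map_mul' x y := (DirectLimit.mul_def (f := seqMap t) n x y).symm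

theorem of_seqMap {i j : ℕ} (h : i ≤ j) (x : X i) : of t j (seqMap t i j h x) = of t i x :=
  DirectLimit.mk_apply (F := fun n => X n) (f := seqMap t) i j x h

theorem of_succ (n : ℕ) (x : X n) : of t (n + 1) (t n x) = of t n x := by
  rw [← of_seqMap t n.le_succ, seqMap_succ]

variable {t}

theorem seqMap_injective (ht : ∀ n, Injective (t n)) {i j : ℕ} (h : i ≤ j) :
    Injective (seqMap t i j h) := by
  induction j, h using Nat.le_induction with
  | base => rw [seqMap_self]; exact injective_id
  | succ j hij ih =>
    rw [← seqMap_trans t hij j.le_succ, seqMap_succ, MonoidHom.coe_comp]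
    exact (ht j).comp ih

theorem of_injective (ht : ∀ n, Injective (t n)) (n : ℕ) : Injective (of t n) :=
  DirectLimit.mk_injective _ (fun _ _ h => seqMap_injective ht h) n

theorem range_of_mono {i j : ℕ} (h : i ≤ j) : Set.range (of t i) ⊆ Set.range (of t j) := by
  rintro _ ⟨x, rfl⟩
  exact ⟨_, of_seqMap t h x⟩

theorem exists_subset_range_of {s : Set (SeqColim t)} (hs : s.Finite) (M : ℕ) :
    ∃ m, M ≤ m ∧ s ⊆ Set.range (of t m) := by
  have hstage (x : SeqColim t) : ∃ n, x ∈ Set.range (of t n) := by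
    obtain ⟨n, y, rfl⟩ := DirectLimit.exists_eq_mk _ x
    exact ⟨n, y, rfl⟩
  choose n hn using hstage
  obtain ⟨m, hm⟩ := (hs.image n).exists_le
  exact ⟨max M m, le_max_left _ _, fun x hx =>
    range_of_mono ((hm _ ⟨x, hx, rfl⟩).trans (le_max_right _ _)) (hn x)⟩

theorem exists_extension (ht : ∀ n, Injective (t n)) {K L : Type*} [Group K] [Group L]
    [Finite K] (i : K →* L) (M : ℕ)
    (hstep : ∀ m ≥ M, ∀ f₀ : K →* X m, Injective f₀ →
      ∃ (j : ℕ) (g : L →* X j), Injective g ∧ ∀ k, of t j (g (i k)) = of t m (f₀ k))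
    (f : K →* SeqColim t) (hf : Injective f) :
    ∃ g : L →* SeqColim t, Injective g ∧ ∀ k, g (i k) = f k := by
  obtain ⟨m, hMm, hm⟩ := exists_subset_range_of (Set.finite_range f) M
  let f₀ : K →* X m := (MonoidHom.ofInjective (of_injective ht m)).symm.toMonoidHom.comp
    (f.codRestrict _ fun k => hm ⟨k, rfl⟩)
  have hf₀ (k : K) : of t m (f₀ k) = f k :=
    congrArg Subtype.val ((MonoidHom.ofInjective (of_injective ht m)).apply_symm_apply _)
  obtain ⟨j, g, hg, hgi⟩ := hstep m hMm f₀ fun k k' h => hf (by rw [← hf₀, ← hf₀, h])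
  exact ⟨(of t j).comp g, (of_injective ht j).comp hg, fun k => (hgi k).trans (hf₀ k)⟩

theorem isLocallyFiniteGroup (hX : ∀ n, IsLocallyFiniteGroup (X n)) :
    IsLocallyFiniteGroup (SeqColim t) := fun s =>
  have ⟨m, _, hm⟩ := exists_subset_range_of s.finite_toSet 0
  (hX m).finite_closure_of_subset_range (of t m) hm

end SeqColim

end GrpCat

section Intertwining

variable {K P Z : Type*} {M : Type v} [Group K] [Group M] [Group P]

def IntertwinesMul (α : K →* M) (β : K →* P) (e : M ≃ P × Z) : Prop :=
  ∀ k x, e (α k * x) = (β k * (e x).1, (e x).2)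

namespace IntertwinesMul

variable {α : K →* M} {β : K →* P} {e : M ≃ P × Z}

theorem symm_apply (he : IntertwinesMul α β e) (k : K) (p : P) (z : Z) :
    e.symm (β k * p, z) = α k * e.symm (p, z) := by
  rw [e.symm_apply_eq, he, Equiv.apply_symm_apply]

theorem symm_mul_inv_symm {e : M ≃ K × Z} (he : IntertwinesMul α (MonoidHom.id K) e)
    (p q : K) (z : Z) : e.symm (p, z) * (e.symm (q, z))⁻¹ = α (p * q⁻¹) := by
  have h := he.symm_apply (p * q⁻¹) q z
  rw [MonoidHom.id_apply, inv_mul_cancel_right] at h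
  rw [h, mul_inv_cancel_right]

end IntertwinesMul

theorem exists_intertwinesMul_id (α : K →* M) (hα : Injective α) :
    ∃ (Ω : Type v) (e : M ≃ K × Ω), IntertwinesMul α (MonoidHom.id K) e := by
  -- `Ω` is the set of right cosets of `α.range`; `c x` locates `x` relative to the chosen
  -- representative of its coset.
  let s := QuotientGroup.rightRel α.range
  have hrel {x y : M} : s.r x y ↔ ∃ k, y = α k * x := by
    simp only [s, QuotientGroup.rightRel_apply, MonoidHom.mem_range]
    exact exists_congr fun k => by rw [eq_comm, mul_inv_eq_iff_eq_mul]
  have hmk (k : K) (x : M) : Quotient.mk s (α k * x) = Quotient.mk s x :=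
    Quotient.sound (hrel.mpr ⟨k⁻¹, by simp⟩)
  have hout (x : M) : ∃ k, x = α k * (Quotient.mk s x).out :=
    hrel.mp (Quotient.exact (Quotient.out_eq (Quotient.mk s x)))
  choose c hc using hout
  have hc_mul (k : K) (x : M) : c (α k * x) = k * c x := by
    have hq := hmk k x
    have h : α (c (α k * x)) * (Quotient.mk s x).out = α (k * c x) * (Quotient.mk s x).out := by
      rw [← hq, ← hc, hq, map_mul, mul_assoc, ← hc]
    exact hα (mul_right_cancel h)
  have hc_out (k : K) (ω : Quotient s) : c (α k * ω.out) = k := by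
    have h := hc ω.out
    rw [Quotient.out_eq, eq_comm, mul_eq_right, ← map_one α] at h
    rw [hc_mul, hα h, mul_one]
  let e : M ≃ K × Quotient s :=
    { toFun x := (c x, Quotient.mk s x)
      invFun p := α p.1 * p.2.out
      left_inv x := (hc x).symm
      right_inv := fun ⟨k, ω⟩ => Prod.ext (hc_out k ω) ((hmk k ω.out).trans ω.out_eq) }
  exact ⟨_, e, fun k x => Prod.ext (hc_mul k x) (hmk k x)⟩

theorem exists_intertwinesMul_of_card_dvd {L : Type*} [Group L] [Finite M] [Finite L]
    (α : K →* M) (hα : Injective α) (i : K →* L) (hi : Injective i)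
    (hdvd : Nat.card L ∣ Nat.card M) : ∃ m, 0 < m ∧ ∃ e : M ≃ L × Fin m, IntertwinesMul α i e := by
  obtain ⟨Ω₁, b₁, hb₁⟩ := exists_intertwinesMul_id α hα
  obtain ⟨Ω₂, b₂, hb₂⟩ := exists_intertwinesMul_id i hi
  obtain ⟨m, hm⟩ := hdvd
  have : Finite K := .of_injective i hi
  have : Finite (K × Ω₁) := .of_equiv _ b₁
  have : Finite (K × Ω₂) := .of_equiv _ b₂
  have : Finite Ω₁ := .prod_right K
  have : Finite Ω₂ := .prod_right K
  have hcard : Nat.card Ω₁ = Nat.card (Ω₂ × Fin m) := by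
    apply Nat.eq_of_mul_eq_mul_left (Nat.card_pos (α := K))
    rw [Nat.card_prod, Nat.card_fin, ← mul_assoc, ← Nat.card_prod, ← Nat.card_prod,
      ← Nat.card_congr b₁, ← Nat.card_congr b₂, hm]
  obtain ⟨e⟩ := Finite.card_eq.mp hcard
  have hm0 : 0 < m := Nat.pos_of_ne_zero fun h =>
    Nat.card_pos.ne' (by rw [hm, h, mul_zero] : Nat.card M = 0)
  refine ⟨m, hm0, b₁.trans ((Equiv.prodCongr (Equiv.refl K) e).trans
    ((Equiv.prodAssoc K Ω₂ (Fin m)).symm.trans (Equiv.prodCongr b₂.symm (Equiv.refl _)))),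
    fun k x => ?_⟩
  simp [hb₁ k x, ← hb₂.symm_apply]

end Intertwining

section Inflate

variable {K L X Y Z : Type*} [Group L]

def inflatePerm (ρ : L →* Equiv.Perm Y) (e : X ≃ Y × Z) : L →* Equiv.Perm X where
  toFun l := e.trans ((Equiv.prodCongr (ρ l) (Equiv.refl Z)).trans e.symm)
  map_one' := by ext; simp
  map_mul' _ _ := by ext; simp [Prod.map]

theorem inflatePerm_apply (ρ : L →* Equiv.Perm Y) (e : X ≃ Y × Z) (l : L) (x : X) :
    inflatePerm ρ e l x = e.symm (ρ l (e x).1, (e x).2) :=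
  rfl

theorem inflatePerm_injective [Nonempty Z] {ρ : L →* Equiv.Perm Y} (hρ : Injective ρ)
    (e : X ≃ Y × Z) : Injective (inflatePerm ρ e) := by
  intro l l' h
  obtain ⟨z⟩ := ‹Nonempty Z›
  refine hρ (Equiv.ext fun y => ?_)
  have := congrArg (fun σ : Equiv.Perm X => e (σ (e.symm (y, z)))) h
  simpa [inflatePerm_apply] using this

theorem IntertwinesMul.inflatePerm_apply_eq [Group K] [Group X] [Group Y] {α : K →* X}
    {β : K →* Y} {e : X ≃ Y × Z} (he : IntertwinesMul α β e) {ρ : L →* Equiv.Perm Y} {l : L}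
    {k : K} (hl : ∀ y, ρ l y = β k * y) (x : X) : inflatePerm ρ e l x = α k * x := by
  rw [inflatePerm_apply, hl, he.symm_apply, Prod.mk.eta, Equiv.symm_apply_apply]

end Inflate

theorem exists_injective_perm_extending {K L F : Type*} [Group K] [Group L] [Group F] [Finite L]
    [Finite F] (i : K →* L) (hi : Injective i) (φ : K →* F) (hφ : Injective φ)
    (hdvd : Nat.card L ∣ Nat.card F) :
    ∃ Ψ : L →* Equiv.Perm F, Injective Ψ ∧ ∀ k y, Ψ (i k) y = φ k * y := by
  obtain ⟨m, hm, e, he⟩ := exists_intertwinesMul_of_card_dvd φ hφ i hi hdvd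
  have : Nonempty (Fin m) := ⟨⟨0, hm⟩⟩
  exact ⟨inflatePerm (MulAction.toPermHom L L) e,
    inflatePerm_injective MulAction.toPerm_injective e,
    fun k => he.inflatePerm_apply_eq fun _ => rfl⟩

section FGMultipliers

variable {N : Type*} [Group N]

def multiplierSubgroup (H : Subgroup N) : Subgroup (Equiv.Perm N) where
  carrier := {σ | ∀ x, σ x * x⁻¹ ∈ H}
  one_mem' x := by simp [one_mem]
  mul_mem' {σ τ} hσ hτ x := by
    have h := mul_mem (hσ (τ x)) (hτ x)
    rwa [mul_assoc, inv_mul_cancel_left] at h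
  inv_mem' {σ} hσ x := by
    have h := inv_mem (hσ (σ⁻¹ x))
    rwa [show σ (σ⁻¹ x) = x from σ.apply_symm_apply x, mul_inv_rev, inv_inv] at h

theorem multiplierSubgroup_mono {H H' : Subgroup N} (h : H ≤ H') :
    multiplierSubgroup H ≤ multiplierSubgroup H' :=
  fun _ hσ x => h (hσ x)

variable (N)

def fgMultiplierPerms : Subgroup (Equiv.Perm N) where
  carrier := {σ | ∃ s : Finset N, σ ∈ multiplierSubgroup (Subgroup.closure (s : Set N))}
  one_mem' := ⟨∅, one_mem _⟩
  mul_mem' := by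
    classical
    rintro σ τ ⟨s, hs⟩ ⟨s', hs'⟩
    have hmono {t : Finset N} (ht : t ⊆ s ∪ s') :=
      multiplierSubgroup_mono (Subgroup.closure_mono (Finset.coe_subset.mpr ht))
    exact ⟨s ∪ s', mul_mem (hmono Finset.subset_union_left hs)
      (hmono Finset.subset_union_right hs')⟩
  inv_mem' := fun ⟨s, hs⟩ => ⟨s, inv_mem hs⟩

def fgMultiplierCayley : N →* fgMultiplierPerms N :=
  (MulAction.toPermHom N N).codRestrict _ fun n => ⟨{n}, fun x => by simp⟩

variable {N}

theorem fgMultiplierCayley_injective : Injective (fgMultiplierCayley N) :=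
  fun _ _ h => MulAction.toPerm_injective (congrArg Subtype.val h)

section Pattern

variable (Φ : Set (Equiv.Perm N)) (F : Subgroup N)

/-- How each `σ ∈ Φ` acts on the right coset `F * x`, read through `a ↦ a * x`. -/
def cosetPattern (x : N) : Φ → F → F → Prop :=
  fun σ a b => σ.1 (a * x) = b * x

/-- Permutations preserving every right coset of `F` and acting in the same way on cosets with
the same `cosetPattern`. -/
def patternPerms : Subgroup (Equiv.Perm N) where
  carrier := {σ | σ ∈ multiplierSubgroup F ∧ ∀ x y, cosetPattern Φ F x = cosetPattern Φ F y →
    ∀ a b : F, σ (a * x) = b * x → σ (a * y) = b * y}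
  one_mem' := ⟨one_mem _, fun x y _ a b h => by
    rw [Equiv.Perm.one_apply] at h ⊢
    rw [mul_right_cancel h]⟩
  mul_mem' := by
    rintro σ τ ⟨hσF, hσ⟩ ⟨hτF, hτ⟩
    refine ⟨mul_mem hσF hτF, fun x y hxy a b h => ?_⟩
    let a' : F := ⟨τ (a * x) * (a * x)⁻¹ * a, mul_mem (hτF _) a.2⟩
    have hτx : τ (a * x) = a' * x := by simp [a', mul_assoc]
    rw [Equiv.Perm.mul_apply, hτ x y hxy a a' hτx]
    exact hσ x y hxy a' b (hτx ▸ h)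
  inv_mem' := by
    rintro σ ⟨hσF, hσ⟩
    refine ⟨inv_mem hσF, fun x y hxy a b h => ?_⟩
    have h' : σ (b * x) = a * x := by rw [← h]; exact σ.apply_symm_apply _
    rw [← hσ x y hxy b a h']
    exact σ.symm_apply_apply _

variable {Φ F}

theorem subset_patternPerms (hΦ : Φ ⊆ multiplierSubgroup F) : Φ ⊆ patternPerms Φ F :=
  fun σ hσ => ⟨hΦ hσ, fun x y hxy a b h => by
    have := congrFun (congrFun (congrFun hxy ⟨σ, hσ⟩) a) b
    simp only [cosetPattern] at this
    exact this.mp h⟩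

/-- A permutation in `patternPerms Φ F` is determined by which `(pattern, a, b)` it realises, and
there are finitely many such data. -/
theorem finite_patternPerms [Finite Φ] [Finite F] :
    (patternPerms Φ F : Set (Equiv.Perm N)).Finite := by
  let code (σ : Equiv.Perm N) (v : Φ → F → F → Prop) (a b : F) : Prop :=
    ∃ x, cosetPattern Φ F x = v ∧ σ (a * x) = b * x
  refine Set.Finite.of_finite_image (f := code) (Set.toFinite _)
    fun σ hσ τ hτ hστ => Equiv.ext fun x => ?_
  let b : F := ⟨σ x * x⁻¹, hσ.1 x⟩
  have hσx : σ ((1 : F) * x) = b * x := by simp [b]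
  obtain ⟨y, hyx, hτy⟩ : code τ (cosetPattern Φ F x) 1 b := hστ ▸ ⟨x, rfl, hσx⟩
  have hτx := hτ.2 y x hyx 1 b hτy
  simp only [OneMemClass.coe_one, one_mul] at hσx hτx
  rw [hσx, hτx]

end Pattern

theorem isLocallyFiniteGroup_fgMultiplierPerms (hN : IsLocallyFiniteGroup N) :
    IsLocallyFiniteGroup (fgMultiplierPerms N) := by
  classical
  intro s
  choose t ht using fun σ : fgMultiplierPerms N => σ.2
  let F := Subgroup.closure ((s.biUnion t : Finset N) : Set N)
  have : Finite F := (hN _).to_subtype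
  let Φ : Set (Equiv.Perm N) := (fgMultiplierPerms N).subtype '' s
  have : Finite Φ := (s.finite_toSet.image _).to_subtype
  have hΦ : Φ ⊆ multiplierSubgroup F := by
    rintro _ ⟨σ, hσ, rfl⟩
    exact multiplierSubgroup_mono
      (Subgroup.closure_mono (Finset.coe_subset.mpr (Finset.subset_biUnion_of_mem t hσ))) (ht σ)
  have hfin : (Subgroup.closure Φ : Set (Equiv.Perm N)).Finite :=
    finite_patternPerms.subset ((Subgroup.closure_le _).mpr (subset_patternPerms hΦ))
  rw [← MonoidHom.map_closure, Subgroup.coe_map] at hfin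
  exact hfin.of_finite_image Subtype.val_injective.injOn

end FGMultipliers

theorem exists_injective_fgMultiplierPerms_extending {N K L : Type*} [Group N] [Group K]
    [Group L] [Finite L] (i : K →* L) (hi : Injective i) (φ : K →* N) (hφ : Injective φ)
    (F : Subgroup N) [Finite F] (hφF : ∀ k, φ k ∈ F) (hdvd : Nat.card L ∣ Nat.card F) :
    ∃ ψ : L →* fgMultiplierPerms N, Injective ψ ∧ ∀ k, ψ (i k) = fgMultiplierCayley N (φ k) := by
  obtain ⟨Ψ, hΨ, hΨi⟩ := exists_injective_perm_extending i hi (φ.codRestrict F hφF)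
    (fun _ _ h => hφ (congrArg Subtype.val h)) hdvd
  obtain ⟨Ω, e, he⟩ := exists_intertwinesMul_id F.subtype Subtype.val_injective
  have : Nonempty Ω := ⟨(e 1).2⟩
  have hmem (l : L) : inflatePerm Ψ e l ∈ fgMultiplierPerms N := by
    refine ⟨(Set.toFinite (F : Set N)).toFinset, fun x => ?_⟩
    rw [Set.Finite.coe_toFinset, Subgroup.closure_eq, inflatePerm_apply]
    have h := he.symm_mul_inv_symm (Ψ l (e x).1) (e x).1 (e x).2
    rw [Prod.mk.eta, e.symm_apply_apply] at h
    exact h ▸ (Ψ l (e x).1 * (e x).1⁻¹).2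
  exact ⟨(inflatePerm Ψ e).codRestrict _ hmem,
    fun _ _ h => inflatePerm_injective hΨ e (congrArg Subtype.val h),
    fun k => Subtype.ext (Equiv.ext (he.inflatePerm_apply_eq (hΨi k)))⟩

section Tower

variable (G : Type u) [Group G]

/-- The factor `Perm (Fin n)` provides finite subgroups of order divisible by any given number. -/
def hallTower : ℕ → GrpCat.{u}
  | 0 => GrpCat.of G
  | n + 1 => GrpCat.of (fgMultiplierPerms (hallTower n) × Equiv.Perm (Fin n))

def hallTowerMap (n : ℕ) : hallTower G n ⟶ hallTower G (n + 1) :=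
  GrpCat.ofHom ((MonoidHom.inl _ _).comp (fgMultiplierCayley _))

theorem hallTowerMap_injective (n : ℕ) : Injective (hallTowerMap G n) :=
  (Prod.mk_left_injective 1).comp fgMultiplierCayley_injective

variable {G}

theorem isLocallyFiniteGroup_hallTower (hG : IsLocallyFiniteGroup G) :
    ∀ n, IsLocallyFiniteGroup (hallTower G n)
  | 0 => hG
  | n + 1 =>
    (isLocallyFiniteGroup_fgMultiplierPerms (isLocallyFiniteGroup_hallTower hG n)).prod .of_finite

theorem exists_extension_hallTower (hG : IsLocallyFiniteGroup G) {K L : Type*} [Group K] [Group L]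
    [Finite L] (i : K →* L) (hi : Injective i) {m : ℕ} (hm : Nat.card L ≤ m)
    (f : K →* hallTower G m) (hf : Injective f) : ∃ g : L →* hallTower G (m + 2),
      Injective g ∧ ∀ k, g (i k) = hallTowerMap G (m + 1) (hallTowerMap G m (f k)) := by
  have : Finite K := .of_injective i hi
  let f₁ : K →* fgMultiplierPerms (hallTower G m) × Equiv.Perm (Fin m) :=
    (hallTowerMap G m).hom.comp f
  have hN := (isLocallyFiniteGroup_fgMultiplierPerms (isLocallyFiniteGroup_hallTower hG m)).prod
    (.of_finite (G := Equiv.Perm (Fin m)))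
  obtain ⟨F, hF, hf₁F, hdvd⟩ := hN.exists_finite_subgroup_card_dvd (Set.finite_range f₁)
    (MonoidHom.inr _ _) (Prod.mk_right_injective 1)
  rw [Nat.card_perm, Nat.card_fin] at hdvd
  obtain ⟨ψ, hψ, hψi⟩ := exists_injective_fgMultiplierPerms_extending i hi f₁
    ((hallTowerMap_injective G m).comp hf) F (fun k => hf₁F ⟨k, rfl⟩)
    ((Nat.dvd_factorial Nat.card_pos hm).trans hdvd)
  exact ⟨(MonoidHom.inl _ _).comp ψ, (Prod.mk_left_injective 1).comp hψ,
    fun k => congrArg (MonoidHom.inl _ _) (hψi k)⟩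

end Tower

/-- Every locally finite group embeds into an existentially closed locally
finite group. -/
theorem stmt2 {G : Type u} [Group G] (hlf : IsLocallyFiniteGroup G) :
    ∃ (H : GrpCat.{u}), IsExistentiallyClosedLF H ∧
      ∃ emb : G →* H, Function.Injective emb := by
  have ht := hallTowerMap_injective G
  refine ⟨GrpCat.of (GrpCat.SeqColim (hallTowerMap G)),
    ⟨GrpCat.SeqColim.isLocallyFiniteGroup (isLocallyFiniteGroup_hallTower hlf), ?_⟩,
    GrpCat.SeqColim.of (X := hallTower G) _ 0, GrpCat.SeqColim.of_injective ht 0⟩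
  intro K L _ _ _ i hi f hf
  have : Finite K := .of_injective i hi
  refine GrpCat.SeqColim.exists_extension ht i (Nat.card L) (fun m hm f₀ hf₀ => ?_) f hf
  obtain ⟨g, hg, hgi⟩ := exists_extension_hallTower hlf i hi hm f₀ hf₀
  exact ⟨m + 2, g, hg, fun k => by rw [hgi, GrpCat.SeqColim.of_succ, GrpCat.SeqColim.of_succ]⟩
end

section
/- Any two countable existentially closed locally finite groups are isomorphic. -/
universe u v

/-!
Back and forth between partial isomorphisms of finite subgroups. Given such a partial
isomorphism `A ≃* B` and `x : G`, local finiteness of `G` makes `⟨A, x⟩` a finite group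
containing `A`, and existential closedness of `H` extends the embedding `A → H` to an embedding
of `⟨A, x⟩`; by symmetry one can also enlarge the codomain. So, for countable `G` and `H`, a chain
of partial isomorphisms meets every condition `x ∈ dom`, `y ∈ cod`, and its union is an
isomorphism.
-/

open Function

theorem IsExistentiallyClosedLF.exists_extension {H : Type*} [Group H]
    (hH : IsExistentiallyClosedLF H) {K L : Type*} [Group K] [Group L] [Finite L]
    (i : K →* L) (hi : Injective i) (f : K →* H) (hf : Injective f) :
    ∃ g : L →* H, Injective g ∧ ∀ x, g (i x) = f x := by
  have : Small.{0} K := small_of_injective hi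
  let eK : Shrink.{0} K ≃* K := Shrink.mulEquiv
  let eL : Shrink.{0} L ≃* L := Shrink.mulEquiv
  obtain ⟨g, hg, hgf⟩ := hH.2 _ _ (eL.symm.toMonoidHom.comp (i.comp eK.toMonoidHom))
    (eL.symm.injective.comp (hi.comp eK.injective)) (f.comp eK.toMonoidHom) (hf.comp eK.injective)
  refine ⟨g.comp eL.symm.toMonoidHom, hg.comp eL.symm.injective, fun x => ?_⟩
  simpa [eK] using hgf (eK.symm x)

structure FinPartialMulEquiv (G : Type u) (H : Type v) [Group G] [Group H] where
  dom : Subgroup G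
  cod : Subgroup H
  finite_dom : Finite dom
  equiv : dom ≃* cod

namespace FinPartialMulEquiv

variable {G : Type u} {H : Type v} [Group G] [Group H]

instance : Preorder (FinPartialMulEquiv G H) where
  le p q := ∃ h : p.dom ≤ q.dom, ∀ x, (q.equiv (Subgroup.inclusion h x) : H) = p.equiv x
  le_refl _ := ⟨le_rfl, fun _ => rfl⟩
  le_trans _ _ _ := fun ⟨h₁, e₁⟩ ⟨h₂, e₂⟩ =>
    ⟨h₁.trans h₂, fun x => (e₂ _).trans (e₁ x)⟩

theorem dom_mono {p q : FinPartialMulEquiv G H} (h : p ≤ q) : p.dom ≤ q.dom := h.1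

theorem equiv_apply_of_le {p q : FinPartialMulEquiv G H} (h : p ≤ q) {x : G} (hp : x ∈ p.dom)
    (hq : x ∈ q.dom) : (q.equiv ⟨x, hq⟩ : H) = p.equiv ⟨x, hp⟩ :=
  h.2 ⟨x, hp⟩

instance : Bot (FinPartialMulEquiv G H) := ⟨⟨⊥, ⊥, inferInstance, MulEquiv.ofUnique⟩⟩

def symm (p : FinPartialMulEquiv G H) : FinPartialMulEquiv H G where
  dom := p.cod
  cod := p.dom
  finite_dom := have := p.finite_dom; .of_equiv _ p.equiv.toEquiv
  equiv := p.equiv.symm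

theorem symm_symm (p : FinPartialMulEquiv G H) : p.symm.symm = p := by
  cases p; rfl

theorem symm_le_symm {p q : FinPartialMulEquiv G H} (h : p ≤ q) : p.symm ≤ q.symm := by
  have key (y : p.cod) : (q.equiv (Subgroup.inclusion h.1 (p.equiv.symm y)) : H) = y := by
    rw [h.2, MulEquiv.apply_symm_apply]
  have hcod : p.cod ≤ q.cod := fun y hy => by
    simpa only [key] using (q.equiv (Subgroup.inclusion h.1 (p.equiv.symm ⟨y, hy⟩))).2
  refine ⟨hcod, fun y => ?_⟩
  change (q.equiv.symm (Subgroup.inclusion hcod y) : G) = p.equiv.symm y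
  rw [show Subgroup.inclusion hcod y = q.equiv _ from Subtype.ext (key y).symm,
    MulEquiv.symm_apply_apply, Subgroup.coe_inclusion]

theorem isCofinal_setOf_mem_dom (hG : IsLocallyFiniteGroup G) (hH : IsExistentiallyClosedLF H)
    (x : G) : IsCofinal {q : FinPartialMulEquiv G H | x ∈ q.dom} := by
  classical
  intro p
  have := p.finite_dom
  let A := Subgroup.closure (insert x (p.dom : Set G))
  have hAfin : Finite A := by
    simpa [A] using (hG (insert x (p.dom : Set G).toFinite.toFinset)).to_subtype
  have hA : p.dom ≤ A := fun a ha => Subgroup.subset_closure (Set.mem_insert_of_mem x ha)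
  obtain ⟨g, hg, hgf⟩ := hH.exists_extension (Subgroup.inclusion hA)
    (Subgroup.inclusion_injective hA) (p.cod.subtype.comp p.equiv.toMonoidHom)
    (p.cod.subtype_injective.comp p.equiv.injective)
  exact ⟨⟨A, g.range, hAfin, MonoidHom.ofInjective hg⟩,
    Subgroup.subset_closure (Set.mem_insert x _), hA, hgf⟩

theorem isCofinal_setOf_mem_cod (hG : IsExistentiallyClosedLF G) (hH : IsLocallyFiniteGroup H)
    (y : H) : IsCofinal {q : FinPartialMulEquiv G H | y ∈ q.cod} := by
  intro p
  obtain ⟨q, hy, hq⟩ := isCofinal_setOf_mem_dom hH hG y p.symm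
  exact ⟨q.symm, hy, p.symm_symm ▸ symm_le_symm hq⟩

theorem nonempty_mulEquiv_of_directed {ι : Type*} (c : ι → FinPartialMulEquiv G H)
    (hc : Directed (· ≤ ·) c) (hdom : ∀ x, ∃ i, x ∈ (c i).dom) (hcod : ∀ y, ∃ i, y ∈ (c i).cod) :
    Nonempty (G ≃* H) := by
  choose i hi using hdom
  let F (x : G) : H := (c (i x)).equiv ⟨x, hi x⟩
  have hF (j : ι) (x : G) (hx : x ∈ (c j).dom) : F x = (c j).equiv ⟨x, hx⟩ := by
    obtain ⟨k, hik, hjk⟩ := hc (i x) j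
    exact (equiv_apply_of_le hik (hi x) (dom_mono hjk hx)).symm.trans
      (equiv_apply_of_le hjk hx _)
  have common (x y : G) : ∃ k, x ∈ (c k).dom ∧ y ∈ (c k).dom := by
    obtain ⟨k, hxk, hyk⟩ := hc (i x) (i y)
    exact ⟨k, dom_mono hxk (hi x), dom_mono hyk (hi y)⟩
  have map_mul (x y : G) : F (x * y) = F x * F y := by
    obtain ⟨k, hx, hy⟩ := common x y
    rw [hF k _ (mul_mem hx hy), hF k x hx, hF k y hy, ← Subgroup.coe_mul, ← map_mul]
    rfl
  refine ⟨MulEquiv.ofBijective (MonoidHom.mk' F map_mul) ⟨fun x y hxy => ?_, fun y => ?_⟩⟩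
  · obtain ⟨k, hx, hy⟩ := common x y
    rw [MonoidHom.mk'_apply, hF k x hx, hF k y hy] at hxy
    simpa using (c k).equiv.injective (Subtype.ext hxy)
  · obtain ⟨k, hy⟩ := hcod y
    let x := (c k).equiv.symm ⟨y, hy⟩
    exact ⟨x, (hF k x x.2).trans (by simp [x])⟩

end FinPartialMulEquiv

/-- Any two countable existentially closed locally finite groups are isomorphic. -/
theorem stmt9 {G : Type u} {H : Type v} [Group G] [Group H]
    [Countable G] [Countable H]
    (hG : IsExistentiallyClosedLF G) (hH : IsExistentiallyClosedLF H) :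
    Nonempty (G ≃* H) := by
  have : Encodable G := Encodable.ofCountable G
  have : Encodable H := Encodable.ofCountable H
  let cofinal : G ⊕ H → Order.Cofinal (FinPartialMulEquiv G H)
    | .inl x => ⟨_, FinPartialMulEquiv.isCofinal_setOf_mem_dom hG.1 hH x⟩
    | .inr y => ⟨_, FinPartialMulEquiv.isCofinal_setOf_mem_cod hG hH.1 y⟩
  let c := Order.sequenceOfCofinals ⊥ cofinal
  exact FinPartialMulEquiv.nonempty_mulEquiv_of_directed c
    (Order.sequenceOfCofinals.monotone ⊥ cofinal).directed_le
    (fun x => ⟨_, Order.sequenceOfCofinals.encode_mem ⊥ cofinal (.inl x)⟩)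
    (fun y => ⟨_, Order.sequenceOfCofinals.encode_mem ⊥ cofinal (.inr y)⟩)
end

section
/- For every locally finite group G there exists an extension G ⊆ G⁺ of locally finite groups and an element a ∈ G⁺ such that: a has order 2, a does not commute with any b ∈ G other than the identity, the subgroups G and a⁻¹Ga of G⁺ commute elementwise, and G⁺ is generated by G ∪ {a}. -/
/-!
Take `G⁺ = G ≀ C₂`, the regular wreath product `(C₂ → G) ⋊ C₂` (with `C₂ = ℤˣ`), with `G`
embedded in the first coordinate of the base and `a` the generator of the top group `C₂`.
Conjugation by `a` swaps the two coordinates, so `a⁻¹Ga` is the second coordinate, which commutes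
with the first, and `a` commutes with `(g, 1)` only if `g = 1`. The base `G × G` is locally finite
and has index `2`; by Schreier's lemma a finitely generated subgroup of `G⁺` meets the base in a
finitely generated, hence finite, subgroup of finite index, so `G⁺` is locally finite.
-/

universe u

open Function

namespace IsLocallyFiniteGroup

variable {G : Type*} [Group G]

theorem finite (h : IsLocallyFiniteGroup G) [Group.FG G] : Finite G := by
  obtain ⟨s, hs⟩ := Group.FG.out (G := G)
  have hfin := h s
  rw [hs, Subgroup.coe_top] at hfin
  exact Set.finite_univ_iff.mp hfin

theorem of_injective {G' : Type*} [Group G'] (h : IsLocallyFiniteGroup G') (f : G →* G')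
    (hf : Injective f) : IsLocallyFiniteGroup G := by
  classical
  intro s
  have hfin := h (s.image f)
  rw [Finset.coe_image, ← MonoidHom.map_closure, Subgroup.coe_map] at hfin
  exact hfin.of_finite_image hf.injOn

theorem of_finiteIndex {N : Subgroup G} [N.FiniteIndex] (hN : IsLocallyFiniteGroup N) :
    IsLocallyFiniteGroup G := by
  intro s
  set L := Subgroup.closure (s : Set G)
  have : Group.FG L := (Group.fg_iff_subgroup_fg L).2 ⟨s, rfl⟩
  let toN : N.subgroupOf L →* N :=
    (L.subtype.comp (N.subgroupOf L).subtype).codRestrict N fun x => x.2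
  have htoN : Injective toN := (MonoidHom.injective_codRestrict _ _ _).2
    (L.subtype_injective.comp (Subgroup.subtype_injective _))
  -- `N.subgroupOf L` has finite index in `L`, so it is finitely generated by Schreier's lemma.
  have hK : Finite (N.subgroupOf L) := (hN.of_injective toN htoN).finite
  have hL : Finite L := (N.subgroupOf L).finite_iff_finite_and_finiteIndex.2 ⟨hK, inferInstance⟩
  exact Set.toFinite (L : Set G)

theorem pi {ι : Type*} [Finite ι] {G : ι → Type*} [∀ i, Group (G i)]
    (h : ∀ i, IsLocallyFiniteGroup (G i)) : IsLocallyFiniteGroup (∀ i, G i) := by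
  classical
  intro s
  let P := Subgroup.pi Set.univ fun i =>
    Subgroup.closure ((s.image (eval i) : Finset (G i)) : Set (G i))
  have hP : (P : Set (∀ i, G i)).Finite := by
    rw [Subgroup.coe_pi]
    exact Set.Finite.pi fun i => h i _
  refine hP.subset (Subgroup.closure_le P |>.2 fun x hx i _ => ?_)
  exact Subgroup.subset_closure (Finset.mem_image_of_mem _ hx)

end IsLocallyFiniteGroup

namespace RegularWreathProduct

variable {D Q : Type*} [Group D] [Group Q]

/-- The base group; Mathlib's `RegularWreathProduct.inl` embeds the top group `Q`. -/
def base : (Q → D) →* D ≀ᵣ Q where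
  toFun f := ⟨f, 1⟩
  map_one' := rfl
  map_mul' f g := by ext <;> simp

@[simp]
theorem left_base (f : Q → D) : (base f).left = f := rfl

@[simp]
theorem right_base (f : Q → D) : (base f).right = 1 := rfl

theorem base_injective : Injective (base : (Q → D) →* D ≀ᵣ Q) :=
  fun _ _ h => congrArg left h

theorem range_base : (base : (Q → D) →* D ≀ᵣ Q).range = rightHom.ker := by
  ext x
  refine ⟨?_, fun hx => ⟨x.left, ?_⟩⟩
  · rintro ⟨f, rfl⟩
    rfl
  · ext <;> simp_all

theorem base_left_mul_inl_right (x : D ≀ᵣ Q) : base x.left * inl x.right = x := by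
  ext <;> simp

theorem inl_inv_mul_base_mul_inl (q : Q) (f : Q → D) :
    (inl q)⁻¹ * base f * inl q = base fun x => f (q * x) := by
  ext <;> simp

theorem isLocallyFiniteGroup [Finite Q] (h : IsLocallyFiniteGroup D) :
    IsLocallyFiniteGroup (D ≀ᵣ Q) := by
  have : (base : (Q → D) →* D ≀ᵣ Q).range.FiniteIndex := by
    rw [range_base]
    infer_instance
  let baseEquiv := MonoidHom.ofInjective (base_injective (D := D) (Q := Q))
  exact ((IsLocallyFiniteGroup.pi fun _ => h).of_injective baseEquiv.symm.toMonoidHom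
    baseEquiv.symm.injective).of_finiteIndex

variable [DecidableEq Q]

theorem inl_inv_mul_base_mulSingle_mul_inl (q i : Q) (d : D) :
    (inl q)⁻¹ * base (Pi.mulSingle i d) * inl q = base (Pi.mulSingle (q⁻¹ * i) d) := by
  rw [inl_inv_mul_base_mul_inl]
  congr 1
  ext x
  simp only [Pi.mulSingle_apply, eq_inv_mul_iff_mul_eq]

theorem eq_one_of_commute_inl_base_mulSingle {q : Q} (hq : q ≠ 1) {d : D}
    (h : Commute (inl q) (base (Pi.mulSingle 1 d))) : d = 1 := by
  have hconj := h.inv_mul_cancel_assoc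
  rw [← mul_assoc, inl_inv_mul_base_mulSingle_mul_inl, mul_one] at hconj
  have := congrFun (base_injective hconj) 1
  rwa [Pi.mulSingle_eq_same, Pi.mulSingle_eq_of_ne (by simpa using hq), eq_comm] at this

theorem closure_range_base_mulSingle_union_image_inl [Finite Q] {S : Set Q}
    (hS : Subgroup.closure S = ⊤) :
    Subgroup.closure (Set.range (fun d : D => base (Pi.mulSingle 1 d)) ∪ inl '' S) = ⊤ := by
  set C := Subgroup.closure (Set.range (fun d : D => base (Pi.mulSingle 1 d)) ∪ inl '' S)
  have hinl (q : Q) : inl q ∈ C := by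
    have hle : Subgroup.closure S ≤ C.comap inl := by
      rw [Subgroup.closure_le]
      exact fun q hq => Subgroup.subset_closure (Or.inr ⟨q, hq, rfl⟩)
    exact hle (hS ▸ Subgroup.mem_top q)
  have hsingle (q : Q) (d : D) : base (Pi.mulSingle q d) ∈ C := by
    have := inl_inv_mul_base_mulSingle_mul_inl q⁻¹ 1 d
    rw [inv_inv, mul_one] at this
    rw [← this]
    exact C.mul_mem (C.mul_mem (C.inv_mem (hinl _)) (Subgroup.subset_closure (Or.inl ⟨d, rfl⟩)))
      (hinl _)
  have hbase (f : Q → D) : base f ∈ C :=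
    Subgroup.pi_mem_of_mulSingle_mem (H := C.comap base) f fun q => hsingle q (f q)
  refine eq_top_iff.2 fun x _ => ?_
  rw [← base_left_mul_inl_right x]
  exact C.mul_mem (hbase _) (hinl _)

end RegularWreathProduct

open RegularWreathProduct in
/-- For every locally finite group `G` there is a locally finite extension
`G ⊆ G⁺` and an element `a ∈ G⁺` of order `2` commuting with no nontrivial
element of `G`, such that `G` and `a⁻¹Ga` commute elementwise and `G⁺` is
generated by `G ∪ {a}`. -/
theorem stmt10 {G : Type u} [Group G] (hlf : IsLocallyFiniteGroup G) :
    ∃ (H : GrpCat.{u}) (e : G →* H) (a : H),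
      Function.Injective e ∧ IsLocallyFiniteGroup H ∧
      a ≠ 1 ∧ a * a = 1 ∧
      (∀ b : G, b ≠ 1 → ¬ Commute a (e b)) ∧
      (∀ g h : G, Commute (e g) (a⁻¹ * e h * a)) ∧
      Subgroup.closure (Set.range e ∪ {a}) = (⊤ : Subgroup H) := by
  have hq : (-1 : ℤˣ) ≠ 1 := by decide
  have hgen : Subgroup.closure {(-1 : ℤˣ)} = ⊤ := by
    refine eq_top_iff.2 fun q _ => ?_
    rcases Int.units_eq_one_or q with rfl | rfl
    exacts [Subgroup.one_mem _, Subgroup.subset_closure rfl]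
  let e : G →* G ≀ᵣ ℤˣ := base.comp (MonoidHom.mulSingle (fun _ : ℤˣ => G) 1)
  have he : Injective e := base_injective.comp (Pi.mulSingle_injective (M := fun _ => G) 1)
  refine ⟨GrpCat.of (G ≀ᵣ ℤˣ), e, inl (-1), he, isLocallyFiniteGroup hlf,
    fun h => hq (congrArg right h), ?_,
    fun b hb hcomm => hb (eq_one_of_commute_inl_base_mulSingle hq hcomm), fun g h => ?_, ?_⟩
  · rw [← map_mul, Int.units_mul_self, map_one]
  · show Commute (e g) ((inl (-1))⁻¹ * base (Pi.mulSingle 1 h) * inl (-1))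
    rw [inl_inv_mul_base_mulSingle_mul_inl]
    exact (Pi.mulSingle_commute (show (1 : ℤˣ) ≠ (-1)⁻¹ * 1 by decide) g h).map base
  · rw [← Set.image_singleton]
    exact closure_range_base_mulSingle_union_image_inl hgen
end

section
/- Every existentially closed locally finite group has trivial center. -/
/-!
If `z ≠ 1` were central, embed the finite group `⟨z⟩` into a finite group `L` in which the image
of `z` is not central: its left regular representation on one copy of `⟨z⟩`, acting trivially on a
second copy, does not commute with the transposition exchanging the two copies of `1`.
Existential closedness extends `⟨z⟩ ↪ H` to an embedding `L ↪ H`, and an embedding reflects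
centrality, so `z` is not central after all.
-/

universe u

theorem MonoidHom.mem_center_of_map_mem_center {L H : Type*} [Group L] [Group H] {g : L →* H}
    (hg : Function.Injective g) {x : L} (hx : g x ∈ Subgroup.center H) :
    x ∈ Subgroup.center L :=
  Subgroup.mem_center_iff.mpr fun y => hg <| by
    rw [map_mul, map_mul, Subgroup.mem_center_iff.mp hx]

theorem Equiv.Perm.sumCongr_one_notMem_center {α β : Type*} [Nonempty β] {σ : Perm α}
    (hσ : σ ≠ 1) : σ.sumCongr (1 : Perm β) ∉ Subgroup.center (Perm (α ⊕ β)) := by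
  classical
  intro hcenter
  obtain ⟨a, ha⟩ : ∃ a, σ a ≠ a := by
    by_contra! h
    exact hσ (Equiv.ext h)
  obtain ⟨b⟩ := ‹Nonempty β›
  have hcomm := congrArg (· (Sum.inr b))
    (Subgroup.mem_center_iff.mp hcenter (swap (Sum.inl a) (Sum.inr b)))
  exact ha (by simpa [Perm.mul_apply, eq_comm] using hcomm)

def leftRegularSumInl (K : Type*) [Group K] : K →* Equiv.Perm (K ⊕ K) :=
  (Equiv.Perm.sumCongrHom K K).comp ((MonoidHom.inl _ _).comp (MulAction.toPermHom K K))

theorem leftRegularSumInl_injective (K : Type*) [Group K] :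
    Function.Injective (leftRegularSumInl K) :=
  Equiv.Perm.sumCongrHom_injective.comp <|
    Prod.mk_left_injective 1 |>.comp MulAction.toPerm_injective

theorem leftRegularSumInl_notMem_center {K : Type*} [Group K] {k : K} (hk : k ≠ 1) :
    leftRegularSumInl K k ∉ Subgroup.center (Equiv.Perm (K ⊕ K)) :=
  Equiv.Perm.sumCongr_one_notMem_center fun h => hk <| by
    simpa using congrArg (· 1) h

theorem IsExistentiallyClosedLF.map_notMem_center {H : Type*} [Group H]
    (hH : IsExistentiallyClosedLF H) {K : Type*} [Group K] [Finite K] {f : K →* H}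
    (hf : Function.Injective f) {k : K} (hk : k ≠ 1) : f k ∉ Subgroup.center H := by
  -- The extension property only speaks about groups in `Type`, so pass to a copy of `K` there.
  let e : Shrink.{0} K ≃* K := Shrink.mulEquiv
  obtain ⟨g, hg, hgi⟩ := hH.2 _ _ (leftRegularSumInl _) (leftRegularSumInl_injective _)
    (f.comp e.toMonoidHom) (hf.comp e.injective)
  intro hcenter
  refine leftRegularSumInl_notMem_center (k := e.symm k) (by simpa using hk)
    (g.mem_center_of_map_mem_center hg ?_)
  simpa [hgi] using hcenter

/-- Every existentially closed locally finite group has trivial center. -/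
theorem stmt11 {H : Type u} [Group H] (hH : IsExistentiallyClosedLF H) :
    Subgroup.center H = ⊥ := by
  refine (Subgroup.eq_bot_iff_forall _).mpr fun z hz => ?_
  by_contra hz1
  let K := Subgroup.closure ({z} : Set H)
  have : Finite K := by simpa using (hH.1 {z}).to_subtype
  have hzK : z ∈ K := Subgroup.subset_closure rfl
  exact hH.map_notMem_center K.subtype_injective (k := ⟨z, hzK⟩)
    (by simpa [Subtype.ext_iff] using hz1) hz
end

section
/- Let G be a locally finite group, n ≥ 1, U = G × {0,…,n−1}. For ā = (a₀,…,a_{n−1}) ∈ Gⁿ and a permutation π of {0,…,n−1}, define h_{ā,π} : U → U by h_{ā,π}(g,ι) = (g·a_ι, π(ι)). Then each h_{ā,π} is a permutation of U, and the subgroup H of Perm(U) generated by all such h_{ā,π} is locally finite. -/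
/-!
Every generator `h a π` commutes with the left translations `(g, ι) ↦ (x * g, ι)`, hence so
does every `f ∈ H`, and such an `f` is determined by the finitely many values `f (1, ι)`.
Given finitely many elements of `H`, the first coordinates of these values generate a subgroup
`K` of `G`, finite since `G` is locally finite. Each given element maps every set `gK × Fin n` onto
itself, and the translation-equivariant permutations with this property form a finite group,
since for them `f (1, ι)` ranges over the finite set `K × Fin n`.
-/

universe u

open Equiv

variable {α : Type*} {G : Type*} [Group G] {ι : Type*}

theorem Subgroup.isLocallyFiniteGroup_of_finite_closure {M : Type*} [Group M] (H : Subgroup M)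
    (h : ∀ s : Finset M, (s : Set M) ⊆ H → (closure (s : Set M) : Set M).Finite) :
    IsLocallyFiniteGroup H := by
  classical
  intro s
  refine Set.Finite.of_finite_image ?_ H.subtype_injective.injOn
  rw [← Subgroup.coe_map, MonoidHom.map_closure, ← Finset.coe_image]
  refine h _ fun x hx => ?_
  obtain ⟨y, -, rfl⟩ := Finset.mem_image.1 hx
  exact y.2

def Setoid.classPreservingPerm (r : Setoid α) : Subgroup (Perm α) where
  carrier := {f | ∀ x, r (f x) x}
  one_mem' x := r.refl x
  mul_mem' hf hg x := r.trans (hf _) (hg x)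
  inv_mem' {f} hf x := by simpa using r.symm (hf (f⁻¹ x))

def leftTranslation (g : G) : Perm (G × ι) := (Equiv.mulLeft g).prodCongr (Equiv.refl ι)

variable (G ι) in
def equivariantPerm : Subgroup (Perm (G × ι)) :=
  Subgroup.centralizer (Set.range leftTranslation)

def leftCosetSetoid (K : Subgroup G) : Setoid (G × ι) :=
  Setoid.comap Prod.fst (QuotientGroup.leftRel K)

theorem leftCosetSetoid_apply {K : Subgroup G} {p q : G × ι} :
    leftCosetSetoid K p q ↔ p.1⁻¹ * q.1 ∈ K := by
  rw [leftCosetSetoid, Setoid.comap_rel, QuotientGroup.leftRel_apply]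

theorem apply_of_mem_equivariantPerm {f : Perm (G × ι)} (hf : f ∈ equivariantPerm G ι)
    (g : G) (i : ι) : f (g, i) = (g * (f (1, i)).1, (f (1, i)).2) := by
  have := congrArg (· (1, i)) (Subgroup.mem_centralizer_iff.1 hf _ ⟨g, rfl⟩)
  simpa [leftTranslation, Prod.map] using this.symm

theorem mem_classPreservingPerm_of_mem_equivariantPerm {f : Perm (G × ι)}
    (hf : f ∈ equivariantPerm G ι) {K : Subgroup G} (hK : ∀ i, (f (1, i)).1 ∈ K) :
    f ∈ (leftCosetSetoid K).classPreservingPerm := by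
  rintro ⟨g, i⟩
  rw [leftCosetSetoid_apply, apply_of_mem_equivariantPerm hf]
  simpa [mul_assoc] using K.inv_mem (hK i)

theorem finite_equivariantPerm_inf_classPreservingPerm [Finite ι] {K : Subgroup G}
    (hK : (K : Set G).Finite) :
    ((equivariantPerm G ι ⊓ (leftCosetSetoid K).classPreservingPerm : Subgroup _) :
      Set (Perm (G × ι))).Finite := by
  refine Set.Finite.of_injOn (f := fun f i => f (1, i))
    (t := Set.univ.pi fun _ => (K : Set G) ×ˢ Set.univ) ?_ ?_ ?_
  · rintro f ⟨-, hf⟩ i -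
    have : (f (1, i)).1⁻¹ ∈ K := by
      simpa [leftCosetSetoid_apply] using hf (1, i)
    exact ⟨inv_mem_iff.1 this, trivial⟩
  · rintro f ⟨hf, -⟩ f' ⟨hf', -⟩ h
    ext ⟨g, i⟩ : 1
    rw [apply_of_mem_equivariantPerm hf, apply_of_mem_equivariantPerm hf',
      show f (1, i) = f' (1, i) from congrFun h i]
  · exact Set.Finite.pi fun _ => hK.prod Set.finite_univ

def wreathPerm (a : ι → G) (π : Perm ι) : Perm (G × ι) where
  toFun p := (p.1 * a p.2, π p.2)
  invFun p := (p.1 * (a (π.symm p.2))⁻¹, π.symm p.2)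
  left_inv p := by simp
  right_inv p := by simp

theorem wreathPerm_mem_equivariantPerm (a : ι → G) (π : Perm ι) :
    wreathPerm a π ∈ equivariantPerm G ι := by
  rw [equivariantPerm, Subgroup.mem_centralizer_iff]
  rintro _ ⟨g, rfl⟩
  ext ⟨x, i⟩ <;> simp [leftTranslation, wreathPerm, mul_assoc]

theorem stmt12_general {G : Type u} [Group G] (hlf : IsLocallyFiniteGroup G)
    (n : ℕ) :
    ∃ h : (Fin n → G) → Equiv.Perm (Fin n) → Equiv.Perm (G × Fin n),
      (∀ (a : Fin n → G) (π : Equiv.Perm (Fin n)) (g : G) (ι : Fin n),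
          h a π (g, ι) = (g * a ι, π ι)) ∧
      IsLocallyFiniteGroup
        ↥(Subgroup.closure {f : Equiv.Perm (G × Fin n) | ∃ a π, f = h a π}) := by
  classical
  refine ⟨wreathPerm, fun _ _ _ _ => rfl, ?_⟩
  refine Subgroup.isLocallyFiniteGroup_of_finite_closure _ fun s hs => ?_
  have hs_equivariant : (s : Set (Perm (G × Fin n))) ⊆ equivariantPerm G (Fin n) :=
    hs.trans <| (Subgroup.closure_le _).2 <| by
      rintro _ ⟨a, π, rfl⟩
      exact wreathPerm_mem_equivariantPerm a π
  let T : Finset G := Finset.image₂ (fun f i => (f (1, i)).1) s Finset.univ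
  refine (finite_equivariantPerm_inf_classPreservingPerm (hlf T)).subset <|
    (Subgroup.closure_le _).2 fun f hf => ⟨hs_equivariant hf, ?_⟩
  exact mem_classPreservingPerm_of_mem_equivariantPerm (hs_equivariant hf) fun i =>
    Subgroup.subset_closure (Finset.mem_image₂_of_mem hf (Finset.mem_univ i))

/-- Let `G` be a locally finite group, `n ≥ 1` and `U = G × Fin n`.  For
`a : Fin n → G` and a permutation `π` of `Fin n`, the map
`(g, ι) ↦ (g * a ι, π ι)` is a permutation `h a π` of `U`, and the subgroup
of `Perm U` generated by all such permutations is locally finite. -/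
theorem stmt12 {G : Type u} [Group G] (hlf : IsLocallyFiniteGroup G)
    (n : ℕ) (hn : 1 ≤ n) :
    ∃ h : (Fin n → G) → Equiv.Perm (Fin n) → Equiv.Perm (G × Fin n),
      (∀ (a : Fin n → G) (π : Equiv.Perm (Fin n)) (g : G) (ι : Fin n),
          h a π (g, ι) = (g * a ι, π ι)) ∧
      IsLocallyFiniteGroup
        ↥(Subgroup.closure {f : Equiv.Perm (G × Fin n) | ∃ a π, f = h a π}) :=
  stmt12_general hlf n
end

section
/- Let ⟨G_n⟩_{n<ω} be an increasing chain of locally finite groups with union G_ω, and for each n let a_n ∈ G_{n+1} be an element that commutes with every element of G_n, such that: (i) the quantifier-free type of a_n over G_n in G_{n+1} is the same for all n (formally: for every word w, w(a_n) = e in G_{n+1} iff w(a_{n+1}) = e in G_{n+2}, and w(a_n) ∈ G_n iff w(a_{n+1}) ∈ G_{n+1}); (ii) the cyclic subgroup ⟨a_n⟩ meets G_n only in the identity except that a_n has fixed finite order k, i.e. for 1 ≤ i ≤ k: a_nⁱ = e iff a_nⁱ ∈ G_n iff i = k. Set b_n = a₀·a₁·⋯·a_n. Then there exists a locally finite group G_{ω+1}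 ⊇ G_ω and an element b_ω ∈ G_{ω+1} such that for every n, the quantifier-free type of b_ω over G_n in G_{ω+1} equals the quantifier-free type of b_n over G_n in G_{n+1}. -/
universe u

/-!
Since `a (m+1)` centralises `G (m+1)`, which contains `b m` and the parameters `c`, a word
satisfies `w(b (m+1), c) = w(b m, c) * a (m+1) ^ s`, where `s` is the exponent sum of the
variable in `w`. As `⟨a (m+1)⟩ ∩ G (m+1) = 1`, this is trivial iff `w(b m, c) = 1` and
`a (m+1) ^ s = 1`; the same argument one level down shows that `w(b m, c) = 1` already forces
`a m ^ s = 1`, and all `a n` have the same order. So the quantifier-free type of `b m` over `G n`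
is the same for all `m ≥ n`, and `b_ω` is the germ of `(b m)` in the reduced power of `G_ω`
along `atTop`, `G_{ω+1}` being generated by the diagonal copy of `G_ω` and `b_ω`.
A finitely generated subgroup of `G_{ω+1}` is the image of a word map with parameters in some
`G N`; its kernel is that of the same word map at `b N` in `G_ω`, whose image is finite.
-/

open Subgroup Filter

section Words

variable {G H ι : Type*} [Group G] [Group H]

def evalWord (x : G) (c : ι → G) : FreeGroup (Option ι) →* G :=
  FreeGroup.lift fun o => Option.elim o x c

def exponentSum (ι : Type*) : FreeGroup (Option ι) →* Multiplicative ℤ :=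
  FreeGroup.lift fun o => Option.elim o (Multiplicative.ofAdd 1) 1

theorem evalWord_mem {K : Subgroup G} {x : G} {c : ι → G} (hx : x ∈ K) (hc : ∀ i, c i ∈ K)
    (w : FreeGroup (Option ι)) : evalWord x c w ∈ K := by
  suffices (evalWord x c).range ≤ K from this ⟨w, rfl⟩
  rw [evalWord, FreeGroup.range_lift_eq_closure, closure_le]
  rintro _ ⟨_ | i, rfl⟩
  exacts [hx, hc i]

theorem map_evalWord (f : G →* H) (x : G) (c : ι → G) (w : FreeGroup (Option ι)) :
    f (evalWord x c w) = evalWord (f x) (f ∘ c) w := by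
  rw [← MonoidHom.comp_apply]
  congr 1
  exact FreeGroup.ext_hom _ _ fun o => by cases o <;> simp [evalWord]

theorem evalWord_mul_of_commute {a x : G} {c : ι → G} (hx : Commute a x)
    (hc : ∀ i, Commute a (c i)) (w : FreeGroup (Option ι)) :
    evalWord (x * a) c w = evalWord x c w * a ^ (exponentSum ι w).toAdd := by
  have hcomm (w) : Commute (evalWord x c w) a :=
    mem_centralizer_singleton_iff.1 <| evalWord_mem (K := centralizer {a})
      (mem_centralizer_singleton_iff.2 hx.symm.eq)
      (fun i => mem_centralizer_singleton_iff.2 (hc i).symm.eq) w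
  induction w with
  | C1 => simp
  | of o => cases o <;> simp [evalWord, exponentSum]
  | inv_of o => cases o <;> simp [evalWord, exponentSum, hx.inv_inv.eq]
  | mul u v hu hv =>
    rw [map_mul, map_mul, hu, hv, map_mul, toAdd_mul, zpow_add,
      ((hcomm v).zpow_right _).symm.mul_mul_mul_comm, mul_assoc]

theorem evalWord_mul_eq_one_iff {K : Subgroup G} {a x : G} {c : ι → G}
    (hK : ∀ g ∈ K, Commute a g) (haK : Disjoint (zpowers a) K) (hx : x ∈ K)
    (hc : ∀ i, c i ∈ K) (w : FreeGroup (Option ι)) :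
    evalWord (x * a) c w = 1 ↔ evalWord x c w = 1 ∧ a ^ (exponentSum ι w).toAdd = 1 := by
  rw [evalWord_mul_of_commute (hK x hx) (fun i => hK _ (hc i))]
  refine ⟨fun h => ?_, fun ⟨h₁, h₂⟩ => by rw [h₁, h₂, mul_one]⟩
  have hpow : a ^ (exponentSum ι w).toAdd = 1 := by
    refine disjoint_def.1 haK (zpow_mem (mem_zpowers a) _) ?_
    rw [← inv_eq_of_mul_eq_one_right h]
    exact inv_mem (evalWord_mem hx hc w)
  rw [hpow, mul_one] at h
  exact ⟨h, hpow⟩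

theorem Subgroup.disjoint_zpowers_of_pow_notMem {K : Subgroup G} {a : G} (ha : IsOfFinOrder a)
    (hK : ∀ i, 0 < i → i < orderOf a → a ^ i ∉ K) : Disjoint (zpowers a) K := by
  classical
  refine disjoint_def.2 fun {g} hg hgK => ?_
  obtain ⟨i, hi, rfl⟩ := Finset.mem_image.1 (ha.mem_zpowers_iff_mem_range_orderOf.1 hg)
  by_contra hne
  exact hK i (Nat.pos_of_ne_zero fun h => hne (by rw [h, pow_zero])) (Finset.mem_range.1 hi) hgK

end Words

namespace Filter.Germ

variable {α : Type*} {l : Filter α}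

def constMulHom (l : Filter α) (M : Type*) [Monoid M] : M →* l.Germ M :=
  (coeMulHom l).comp (Pi.constMonoidHom α M)

theorem constMulHom_injective [l.NeBot] (M : Type*) [Monoid M] :
    Function.Injective (constMulHom l M) :=
  fun _ _ h => const_inj.1 h

theorem evalWord_coe {G ι : Type*} [Group G] (x : α → G) (c : ι → α → G)
    (w : FreeGroup (Option ι)) :
    evalWord (x : l.Germ G) (fun i => (c i : l.Germ G)) w =
      ↑(fun t => evalWord (x t) (fun i => c i t) w) := by
  have hpoint : evalWord x c w = fun t => evalWord (x t) (fun i => c i t) w :=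
    funext fun t => map_evalWord (Pi.evalMonoidHom _ t) x c w
  rw [← hpoint]
  exact (map_evalWord (coeMulHom l) x c w).symm

end Filter.Germ

section LocallyFinite

variable {G : Type*} [Group G]

theorem Subgroup.exists_finset_subset_of_mem_closure {s : Set G} {x : G} (hx : x ∈ closure s) :
    ∃ F : Finset G, ↑F ⊆ s ∧ x ∈ closure (F : Set G) := by
  classical
  induction hx using closure_induction with
  | mem y hy => exact ⟨{y}, by simpa using hy, subset_closure (by simp)⟩
  | one => exact ⟨∅, by simp, one_mem _⟩
  | mul y z _ _ hy hz =>
    obtain ⟨F, hF, hyF⟩ := hy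
    obtain ⟨F', hF', hzF'⟩ := hz
    refine ⟨F ∪ F', by simp [hF, hF'], mul_mem (closure_mono ?_ hyF) (closure_mono ?_ hzF')⟩
    all_goals simp
  | inv y _ hy =>
    obtain ⟨F, hF, hyF⟩ := hy
    exact ⟨F, hF, inv_mem hyF⟩

theorem isLocallyFiniteGroup_closure {X : Set G}
    (hX : ∀ F : Finset G, ↑F ⊆ X → (closure (F : Set G) : Set G).Finite) :
    IsLocallyFiniteGroup (closure X) := by
  classical
  intro t
  choose F hFX hF using fun x : closure X => exists_finset_subset_of_mem_closure x.2
  have hle : (closure (t : Set (closure X))).map (closure X).subtype ≤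
      closure (t.biUnion F : Set G) := by
    rw [MonoidHom.map_closure, closure_le]
    rintro _ ⟨x, hx, rfl⟩
    exact closure_mono (Finset.coe_subset.2 (Finset.subset_biUnion_of_mem F hx)) (hF x)
  refine Set.Finite.of_finite_image ((hX _ ?_).subset hle) Subtype.val_injective.injOn
  simpa using fun x _ => hFX x

theorem IsLocallyFiniteGroup.finite_range_lift {α : Type*} [Finite α]
    (hG : IsLocallyFiniteGroup G) (f : α → G) : Finite (FreeGroup.lift f).range := by
  classical
  rw [FreeGroup.range_lift_eq_closure]
  simpa using (hG (Set.finite_range f).toFinset).to_subtype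

theorem MonoidHom.finite_range_of_ker_eq {A B : Type*} [Group A] [Group B] (f : A →* B)
    (g : A →* G) (hfg : f.ker = g.ker) [Finite f.range] : Finite g.range :=
  .of_equiv _ ((QuotientGroup.quotientKerEquivRange f).symm.trans <|
    (QuotientGroup.quotientMulEquivOfEq hfg).trans (QuotientGroup.quotientKerEquivRange g)).toEquiv

end LocallyFinite

section Chain

variable {G ι : Type*} [Group G] {K : ℕ → Subgroup G} {a b : ℕ → G}

structure IsPartialProductChain (K : ℕ → Subgroup G) (a b : ℕ → G) : Prop where
  mono : Monotone K
  mem : ∀ n, a n ∈ K (n + 1)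
  commute : ∀ n, ∀ g ∈ K n, Commute (a n) g
  disjoint : ∀ n, Disjoint (zpowers (a n)) (K n)
  orderOf_succ : ∀ n, orderOf (a (n + 1)) = orderOf (a n)
  prod_zero : b 0 = a 0
  prod_succ : ∀ n, b (n + 1) = b n * a (n + 1)

namespace IsPartialProductChain

theorem exists_mem_mul_eq (h : IsPartialProductChain K a b) (n : ℕ) :
    ∃ x ∈ K n, b n = x * a n := by
  induction n with
  | zero => exact ⟨1, one_mem _, by rw [h.prod_zero, one_mul]⟩
  | succ n ih =>
    obtain ⟨x, hx, hbx⟩ := ih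
    exact ⟨b n, hbx ▸ mul_mem (h.mono n.le_succ hx) (h.mem n), h.prod_succ n⟩

theorem pow_exponentSum_eq_one (h : IsPartialProductChain K a b) {n : ℕ} {c : ι → G}
    (hc : ∀ i, c i ∈ K n) {w : FreeGroup (Option ι)} (hw : evalWord (b n) c w = 1) :
    a n ^ (exponentSum ι w).toAdd = 1 := by
  obtain ⟨x, hx, hbx⟩ := h.exists_mem_mul_eq n
  rw [hbx] at hw
  exact ((evalWord_mul_eq_one_iff (h.commute n) (h.disjoint n) hx hc w).1 hw).2

theorem evalWord_succ_eq_one_iff (h : IsPartialProductChain K a b) {n : ℕ} {c : ι → G}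
    (hc : ∀ i, c i ∈ K n) (w : FreeGroup (Option ι)) :
    evalWord (b (n + 1)) c w = 1 ↔ evalWord (b n) c w = 1 := by
  obtain ⟨x, hx, hbx⟩ := h.exists_mem_mul_eq n
  have hbn : b n ∈ K (n + 1) := hbx ▸ mul_mem (h.mono n.le_succ hx) (h.mem n)
  rw [h.prod_succ, evalWord_mul_eq_one_iff (h.commute _) (h.disjoint _) hbn
    (fun i => h.mono n.le_succ (hc i)), and_iff_left_of_imp]
  intro hw
  rw [← orderOf_dvd_iff_zpow_eq_one, h.orderOf_succ, orderOf_dvd_iff_zpow_eq_one]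
  exact h.pow_exponentSum_eq_one hc hw

theorem evalWord_eq_one_iff_of_le (h : IsPartialProductChain K a b) {n m : ℕ} (hnm : n ≤ m)
    {c : ι → G} (hc : ∀ i, c i ∈ K n) (w : FreeGroup (Option ι)) :
    evalWord (b m) c w = 1 ↔ evalWord (b n) c w = 1 := by
  induction m, hnm using Nat.le_induction with
  | base => rfl
  | succ m hnm ih => rw [h.evalWord_succ_eq_one_iff (fun i => h.mono hnm (hc i)), ih]

theorem evalWord_germ_eq_one_iff (h : IsPartialProductChain K a b) {n : ℕ} {c : ι → G}
    (hc : ∀ i, c i ∈ K n) (w : FreeGroup (Option ι)) :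
    evalWord (b : (atTop : Filter ℕ).Germ G) (Germ.constMulHom atTop G ∘ c) w = 1 ↔
      evalWord (b n) c w = 1 := by
  change evalWord _ (fun i => Germ.ofFun fun _ => c i) w = 1 ↔ _
  rw [Germ.evalWord_coe, ← Germ.coe_one, Germ.coe_eq, EventuallyEq,
    ← eventually_const (f := (atTop : Filter ℕ)) (p := evalWord (b n) c w = 1)]
  exact eventually_congr <|
    eventually_atTop.2 ⟨n, fun m hm => h.evalWord_eq_one_iff_of_le hm hc w⟩

theorem isLocallyFiniteGroup_closure_germ (h : IsPartialProductChain K a b)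
    (hG : IsLocallyFiniteGroup G) (hK : ⨆ n, K n = ⊤) :
    IsLocallyFiniteGroup (closure (insert (b : (atTop : Filter ℕ).Germ G)
      (Set.range (Germ.constMulHom atTop G)))) := by
  refine isLocallyFiniteGroup_closure fun F hF => ?_
  have hev (g : G) : ∀ᶠ n in atTop, g ∈ K n := by
    obtain ⟨n, hn⟩ := (mem_iSup_of_directed h.mono.directed_le).1 (hK ▸ mem_top g)
    exact eventually_atTop.2 ⟨n, fun m hm => h.mono hm hn⟩
  set D : Set G := Germ.constMulHom atTop G ⁻¹' (F : Set ((atTop : Filter ℕ).Germ G))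
  have hD : D.Finite := F.finite_toSet.preimage (Germ.constMulHom_injective _).injOn
  have : Finite D := hD.to_subtype
  obtain ⟨N, hN⟩ := ((eventually_all_finite hD).2 fun g _ => hev g).exists
  let φ := evalWord (b N) ((↑) : D → G)
  let Φ := evalWord (b : (atTop : Filter ℕ).Germ G)
    (Germ.constMulHom atTop G ∘ ((↑) : D → G))
  have hker : φ.ker = Φ.ker := by
    ext w
    exact (h.evalWord_germ_eq_one_iff (fun g : D => hN g g.2) w).symm
  have : Finite φ.range := hG.finite_range_lift _
  have : Finite Φ.range := MonoidHom.finite_range_of_ker_eq φ Φ hker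
  refine (Set.toFinite (Φ.range : Set _)).subset ((closure_le _).2 fun q hq => ?_)
  rcases hF hq with rfl | ⟨g, rfl⟩
  · exact ⟨FreeGroup.of none, FreeGroup.lift_apply_of⟩
  · exact ⟨FreeGroup.of (some ⟨g, hq⟩), FreeGroup.lift_apply_of⟩

end IsPartialProductChain

end Chain

theorem stmt13_general {Gω : Type u} [Group Gω] (hlf : IsLocallyFiniteGroup Gω)
    (G : ℕ → Subgroup Gω) (hmono : Monotone G) (hunion : (⨆ n, G n) = ⊤)
    (k : ℕ) (hk : 2 ≤ k)
    (a : ℕ → Gω) (ha : ∀ n, a n ∈ G (n + 1))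
    -- each `a_n` commutes with every element of `G_n`
    (hcomm : ∀ n, ∀ g ∈ G n, Commute (a n) g)
    -- (ii) for `1 ≤ i ≤ k` : `a_nⁱ = e` iff `a_nⁱ ∈ G_n` iff `i = k`
    (horder : ∀ n i, 1 ≤ i → i ≤ k →
        ((a n ^ i = 1) ↔ i = k) ∧ ((a n ^ i ∈ G n) ↔ i = k))
    -- `b_n = a₀ · a₁ · ⋯ · a_n`
    (b : ℕ → Gω) (hb0 : b 0 = a 0) (hbs : ∀ n, b (n + 1) = b n * a (n + 1)) :
    ∃ (H : GrpCat.{u}) (e : Gω →* H), Function.Injective e ∧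
      IsLocallyFiniteGroup H ∧
      ∃ bω : H, ∀ (n : ℕ) (w : FreeGroup (Option ℕ)) (c : ℕ → Gω),
        (∀ i, c i ∈ G n) →
        ((FreeGroup.lift fun o => Option.elim o bω fun i => e (c i)) w = 1 ↔
          (FreeGroup.lift fun o => Option.elim o (b n) fun i => c i) w = 1) := by
  have hk0 : 0 < k := by omega
  have hord (n : ℕ) : orderOf (a n) = k := (orderOf_eq_iff hk0).2
    ⟨(horder n k hk0 le_rfl).1.2 rfl, fun i hik hi h1 => hik.ne ((horder n i hi hik.le).1.1 h1)⟩
  have hdisj (n : ℕ) : Disjoint (zpowers (a n)) (G n) := by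
    refine disjoint_zpowers_of_pow_notMem (orderOf_pos_iff.1 (hord n ▸ hk0)) fun i hi hik => ?_
    rw [hord] at hik
    exact fun hmem => hik.ne ((horder n i hi hik.le).2.1 hmem)
  have hchain : IsPartialProductChain G a b :=
    { mono := hmono, mem := ha, commute := hcomm, disjoint := hdisj,
      orderOf_succ := fun n => by rw [hord, hord], prod_zero := hb0, prod_succ := hbs }
  set H := closure <|
    insert (b : (atTop : Filter ℕ).Germ Gω) (Set.range (Germ.constMulHom atTop Gω))
  refine ⟨GrpCat.of H, (Germ.constMulHom atTop Gω).codRestrict H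
      fun g => subset_closure (.inr ⟨g, rfl⟩), MonoidHom.injective_codRestrict _ _ _ |>.2
        (Germ.constMulHom_injective _),
    hchain.isLocallyFiniteGroup_closure_germ hlf hunion, ⟨b, subset_closure (.inl rfl)⟩,
    fun n w c hc => ?_⟩
  change evalWord _ _ w = 1 ↔ evalWord _ _ w = 1
  rw [← H.subtype_injective.eq_iff, map_evalWord, map_one]
  exact hchain.evalWord_germ_eq_one_iff hc w

/-- Limits of partial products: given an increasing chain `⟨G_n⟩` of (locally
finite) groups with union `G_ω`, and elements `a_n ∈ G_{n+1}` commuting with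
`G_n`, with constant quantifier-free type over `G_n` and cyclic group meeting
`G_n` trivially except for the fixed order `k`, the partial products
`b_n = a₀⋯a_n` have a limit: there is a locally finite `G_{ω+1} ⊇ G_ω` with an
element `b_ω` whose quantifier-free type over each `G_n` equals that of `b_n`. -/
theorem stmt13 {Gω : Type u} [Group Gω] (hlf : IsLocallyFiniteGroup Gω)
    (G : ℕ → Subgroup Gω) (hmono : Monotone G) (hunion : (⨆ n, G n) = ⊤)
    (k : ℕ) (hk : 2 ≤ k)
    (a : ℕ → Gω) (ha : ∀ n, a n ∈ G (n + 1))
    -- each `a_n` commutes with every element of `G_n`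
    (hcomm : ∀ n, ∀ g ∈ G n, Commute (a n) g)
    -- (i) the quantifier-free type of `a_n` over `G_n` is the same for all `n`
    (htype : ∀ (n : ℕ) (w : FreeGroup Unit),
        ((FreeGroup.lift fun _ => a n) w = 1 ↔
          (FreeGroup.lift fun _ => a (n + 1)) w = 1) ∧
        ((FreeGroup.lift fun _ => a n) w ∈ G n ↔
          (FreeGroup.lift fun _ => a (n + 1)) w ∈ G (n + 1)))
    -- (ii) for `1 ≤ i ≤ k` : `a_nⁱ = e` iff `a_nⁱ ∈ G_n` iff `i = k`
    (horder : ∀ n i, 1 ≤ i → i ≤ k →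
        ((a n ^ i = 1) ↔ i = k) ∧ ((a n ^ i ∈ G n) ↔ i = k))
    -- `b_n = a₀ · a₁ · ⋯ · a_n`
    (b : ℕ → Gω) (hb0 : b 0 = a 0) (hbs : ∀ n, b (n + 1) = b n * a (n + 1)) :
    ∃ (H : GrpCat.{u}) (e : Gω →* H), Function.Injective e ∧
      IsLocallyFiniteGroup H ∧
      ∃ bω : H, ∀ (n : ℕ) (w : FreeGroup (Option ℕ)) (c : ℕ → Gω),
        (∀ i, c i ∈ G n) →
        ((FreeGroup.lift fun o => Option.elim o bω fun i => e (c i)) w = 1 ↔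
          (FreeGroup.lift fun o => Option.elim o (b n) fun i => c i) w = 1) :=
  stmt13_general hlf G hmono hunion k hk a ha hcomm horder b hb0 hbs
end

section
/- Let NF_fin(G₀,G₁,G₂,G₃) denote the canonical stable amalgam of finite groups G₁, G₂ over G₀ (defined via all coset-triple permutation amalgams). Then NF_fin is symmetric: NF_fin(G₀,G₁,G₂,G₃) implies NF_fin(G₀,G₂,G₁,G₃). -/
universe u

/-- An amalgamation try over `G₀ ⊆ H₁`, `G₀ ⊆ H₂` (given by the embeddings
`κ₁`, `κ₂`): a choice of left coset representative sets `I₁ ⊆ H₁`, `I₂ ⊆ H₂`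
of `G₀`, both containing the identity. -/
structure AmalgTry (G₀ H₁ H₂ : Type u) [Group G₀] [Group H₁] [Group H₂]
    (κ₁ : G₀ →* H₁) (κ₂ : G₀ →* H₂) where
  I₁ : Set H₁
  I₂ : Set H₂
  one₁ : (1 : H₁) ∈ I₁
  one₂ : (1 : H₂) ∈ I₂
  rep₁ : ∀ g : H₁, ∃! r, r ∈ I₁ ∧ ∃ h : G₀, g = r * κ₁ h
  rep₂ : ∀ g : H₂, ∃! r, r ∈ I₂ ∧ ∃ h : G₀, g = r * κ₂ h

namespace AmalgTry

variable {G₀ H₁ H₂ : Type u} [Group G₀] [Group H₁] [Group H₂]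
  {κ₁ : G₀ →* H₁} {κ₂ : G₀ →* H₂}

/-- The set of triples `(g₀, g₁, g₂)` with `g₀ ∈ G₀`, `g₁ ∈ I₁`, `g₂ ∈ I₂`. -/
abbrev U (x : AmalgTry G₀ H₁ H₂ κ₁ κ₂) : Type u :=
  {p : G₀ × H₁ × H₂ // p.2.1 ∈ x.I₁ ∧ p.2.2 ∈ x.I₂}

/-- The canonical action of `g ∈ H₁` on the triples: `(g₀,g₁,g₂) ↦ (g₀',g₁',g₂)`
where `g₁' * g₀' = g₁ * g₀ * g` is the unique coset decomposition. -/
noncomputable def j₁ (x : AmalgTry G₀ H₁ H₂ κ₁ κ₂) (g : H₁) (u : x.U) : x.U :=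
  ⟨⟨((x.rep₁ (u.val.2.1 * κ₁ u.val.1 * g)).exists.choose_spec.2).choose,
    (x.rep₁ (u.val.2.1 * κ₁ u.val.1 * g)).exists.choose,
    u.val.2.2⟩,
   ⟨(x.rep₁ (u.val.2.1 * κ₁ u.val.1 * g)).exists.choose_spec.1, u.prop.2⟩⟩

/-- The canonical action of `g ∈ H₂` on the triples: `(g₀,g₁,g₂) ↦ (g₀'',g₁,g₂'')`
where `g₂'' * g₀'' = g₂ * g₀ * g` is the unique coset decomposition. -/
noncomputable def j₂ (x : AmalgTry G₀ H₁ H₂ κ₁ κ₂) (g : H₂) (u : x.U) : x.U :=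
  ⟨⟨((x.rep₂ (u.val.2.2 * κ₂ u.val.1 * g)).exists.choose_spec.2).choose,
    u.val.2.1,
    (x.rep₂ (u.val.2.2 * κ₂ u.val.1 * g)).exists.choose⟩,
   ⟨u.prop.1, (x.rep₂ (u.val.2.2 * κ₂ u.val.1 * g)).exists.choose_spec.1⟩⟩

end AmalgTry

/-- `F : G₃ → (U → U)` is a compatible homomorphism for the try `x`: it is an
(anti)homomorphism to the permutations of the triples (composition read from
the left as in the paper) restricting to `j₁` on `G₁` and to `j₂` on `G₂`. -/
def CompatAt {G₀ G₁ G₂ G₃ H₁ H₂ : Type u}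
    [Group G₀] [Group G₁] [Group G₂] [Group G₃] [Group H₁] [Group H₂]
    (ι₁ : G₀ →* G₁) (ι₂ : G₀ →* G₂) (e₁ : G₁ →* G₃) (e₂ : G₂ →* G₃)
    (f₁ : G₁ →* H₁) (f₂ : G₂ →* H₂)
    (x : AmalgTry G₀ H₁ H₂ (f₁.comp ι₁) (f₂.comp ι₂))
    (F : G₃ → (x.U → x.U)) : Prop :=
  F 1 = id ∧ (∀ a b : G₃, F (a * b) = F b ∘ F a) ∧
  (∀ g : G₁, F (e₁ g) = x.j₁ (f₁ g)) ∧ (∀ g : G₂, F (e₂ g) = x.j₂ (f₂ g))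

/-- A witness that some amalgamation try separates `a ∈ G₃` from the identity. -/
structure SepWitness {G₀ G₁ G₂ G₃ : Type u}
    [Group G₀] [Group G₁] [Group G₂] [Group G₃]
    (ι₁ : G₀ →* G₁) (ι₂ : G₀ →* G₂) (e₁ : G₁ →* G₃) (e₂ : G₂ →* G₃)
    (a : G₃) : Type (u + 1) where
  H₁ : Type u
  H₂ : Type u
  [grp₁ : Group H₁]
  [grp₂ : Group H₂]
  f₁ : G₁ →* H₁
  f₂ : G₂ →* H₂
  inj₁ : Function.Injective f₁
  inj₂ : Function.Injective f₂
  lf₁ : IsLocallyFiniteGroup H₁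
  lf₂ : IsLocallyFiniteGroup H₂
  x : AmalgTry G₀ H₁ H₂ (f₁.comp ι₁) (f₂.comp ι₂)
  F : G₃ → (x.U → x.U)
  compat : CompatAt ι₁ ι₂ e₁ e₂ f₁ f₂ x F
  sep : F a ≠ id

/-- `NF_fin(G₀,G₁,G₂,G₃)`: the canonical stable amalgam of `G₁`, `G₂` over `G₀`
inside `G₃` (the subgroup inclusions are given by the injective homomorphisms
`ι₁`, `ι₂`, `e₁`, `e₂` with `e₁ ∘ ι₁ = e₂ ∘ ι₂`, and `G₃ = ⟨G₁ ∪ G₂⟩`):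
for every amalgamation try (over locally finite extensions of the factors)
there is a compatible homomorphism from `G₃`, and these jointly separate
the points of `G₃`. -/
def NFfin (G₀ G₁ G₂ G₃ : Type u) [Group G₀] [Group G₁] [Group G₂] [Group G₃]
    (ι₁ : G₀ →* G₁) (ι₂ : G₀ →* G₂) (e₁ : G₁ →* G₃) (e₂ : G₂ →* G₃) : Prop :=
  Function.Injective ι₁ ∧ Function.Injective ι₂ ∧
  Function.Injective e₁ ∧ Function.Injective e₂ ∧
  (∀ g : G₀, e₁ (ι₁ g) = e₂ (ι₂ g)) ∧
  Subgroup.closure (Set.range e₁ ∪ Set.range e₂) = (⊤ : Subgroup G₃) ∧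
  (∀ (H₁ H₂ : Type u) [Group H₁] [Group H₂] (f₁ : G₁ →* H₁) (f₂ : G₂ →* H₂),
    Function.Injective f₁ → Function.Injective f₂ →
    IsLocallyFiniteGroup H₁ → IsLocallyFiniteGroup H₂ →
    ∀ x : AmalgTry G₀ H₁ H₂ (f₁.comp ι₁) (f₂.comp ι₂),
      ∃ F : G₃ → (x.U → x.U), CompatAt ι₁ ι₂ e₁ e₂ f₁ f₂ x F) ∧
  (∀ a : G₃, a ≠ 1 → Nonempty (SepWitness ι₁ ι₂ e₁ e₂ a))

namespace AmalgTry

variable {G₀ A B : Type u} [Group G₀] [Group A] [Group B] {κa : G₀ →* A} {κb : G₀ →* B}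

def swap (x : AmalgTry G₀ A B κa κb) : AmalgTry G₀ B A κb κa :=
  ⟨x.I₂, x.I₁, x.one₂, x.one₁, x.rep₂, x.rep₁⟩

def swapEquiv (x : AmalgTry G₀ A B κa κb) : x.U ≃ x.swap.U where
  toFun u := ⟨(u.val.1, u.val.2.2, u.val.2.1), u.prop.2, u.prop.1⟩
  invFun u := ⟨(u.val.1, u.val.2.2, u.val.2.1), u.prop.2, u.prop.1⟩
  left_inv _ := rfl
  right_inv _ := rfl

theorem swap_j₁ (x : AmalgTry G₀ A B κa κb) (g : B) :
    x.swap.j₁ g = x.swapEquiv.conj (x.j₂ g) := rfl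

theorem swap_j₂ (x : AmalgTry G₀ A B κa κb) (g : A) :
    x.swap.j₂ g = x.swapEquiv.conj (x.j₁ g) := rfl

end AmalgTry

section Swap

variable {G₀ G₁ G₂ G₃ : Type u} [Group G₀] [Group G₁] [Group G₂] [Group G₃]
  {ι₁ : G₀ →* G₁} {ι₂ : G₀ →* G₂} {e₁ : G₁ →* G₃} {e₂ : G₂ →* G₃}

theorem CompatAt.swap {A B : Type u} [Group A] [Group B] {f₁ : G₁ →* A} {f₂ : G₂ →* B}
    {x : AmalgTry G₀ A B (f₁.comp ι₁) (f₂.comp ι₂)} {F : G₃ → (x.U → x.U)}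
    (hF : CompatAt ι₁ ι₂ e₁ e₂ f₁ f₂ x F) :
    CompatAt ι₂ ι₁ e₂ e₁ f₂ f₁ x.swap (x.swapEquiv.conj ∘ F) := by
  obtain ⟨h_one, h_mul, h_j₁, h_j₂⟩ := hF
  refine ⟨?_, fun a b => ?_, fun g => ?_, fun g => ?_⟩
  · funext u
    simp [h_one]
  · simp only [Function.comp_apply, h_mul, Equiv.conj_comp]
  · simp only [Function.comp_apply, h_j₂, x.swap_j₁]
  · simp only [Function.comp_apply, h_j₁, x.swap_j₂]

def SepWitness.swap {a : G₃} (W : SepWitness ι₁ ι₂ e₁ e₂ a) : SepWitness ι₂ ι₁ e₂ e₁ a :=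
  letI := W.grp₁
  letI := W.grp₂
  { H₁ := W.H₂, H₂ := W.H₁, f₁ := W.f₂, f₂ := W.f₁, inj₁ := W.inj₂, inj₂ := W.inj₁,
    lf₁ := W.lf₂, lf₂ := W.lf₁, x := W.x.swap, F := W.x.swapEquiv.conj ∘ W.F,
    compat := W.compat.swap
    sep := fun h => W.sep <| W.x.swapEquiv.conj.injective <| h.trans <| by
      funext u
      simp }

end Swap

theorem stmt14_general {G₀ G₁ G₂ G₃ : Type u}
    [Group G₀] [Group G₁] [Group G₂] [Group G₃]
    (ι₁ : G₀ →* G₁) (ι₂ : G₀ →* G₂) (e₁ : G₁ →* G₃) (e₂ : G₂ →* G₃)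
    (h : NFfin G₀ G₁ G₂ G₃ ι₁ ι₂ e₁ e₂) :
    NFfin G₀ G₂ G₁ G₃ ι₂ ι₁ e₂ e₁ := by
  obtain ⟨hι₁, hι₂, he₁, he₂, hcomm, hclosure, hcompat, hsep⟩ := h
  refine ⟨hι₂, hι₁, he₂, he₁, fun g => (hcomm g).symm, ?_, ?_, ?_⟩
  · rwa [Set.union_comm]
  · intro H₁ H₂ _ _ f₁ f₂ hf₁ hf₂ lf₁ lf₂ x
    -- `x.swap.swap` is `x` by structure eta, so `hF.swap` is a statement about `x`.
    obtain ⟨F, hF⟩ := hcompat H₂ H₁ f₂ f₁ hf₂ hf₁ lf₂ lf₁ x.swap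
    exact ⟨_, hF.swap⟩
  · exact fun a ha => (hsep a ha).map SepWitness.swap

/-- The canonical stable amalgam of finite groups is symmetric:
`NF_fin(G₀,G₁,G₂,G₃)` implies `NF_fin(G₀,G₂,G₁,G₃)`. -/
theorem stmt14 {G₀ G₁ G₂ G₃ : Type u}
    [Group G₀] [Group G₁] [Group G₂] [Group G₃]
    [Finite G₀] [Finite G₁] [Finite G₂] [Finite G₃]
    (ι₁ : G₀ →* G₁) (ι₂ : G₀ →* G₂) (e₁ : G₁ →* G₃) (e₂ : G₂ →* G₃)
    (h : NFfin G₀ G₁ G₂ G₃ ι₁ ι₂ e₁ e₂) :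
    NFfin G₀ G₂ G₁ G₃ ι₂ ι₁ e₂ e₁ :=
  stmt14_general ι₁ ι₂ e₁ e₂ h
end

section
/- Uniqueness of the stable amalgam: if NF_fin(G₀,G₁,G₂,G₃) and NF_fin(G₀',G₁',G₂',G₃') both hold with G₃' = ⟨G₁' ∪ G₂'⟩, and f₁ : G₁' ≅ G₁, f₂ : G₂' ≅ G₂ are isomorphisms agreeing on G₀', then there is a unique embedding f₃ : G₃' → G₃ extending f₁ ∪ f₂; it is onto if G₃ = ⟨G₁ ∪ G₂⟩. -/
universe u

/-!
The isomorphism is read off from its graph `S ≤ G₃' × G₃`, the subgroup generated by the pairs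
`(e₁' z, e₁ (f₁ z))` and `(e₂' z, e₂ (f₂ z))`. Both amalgams are generated by their factors, so
`S` projects onto `G₃'` and onto `G₃`; by Goursat's lemma it remains to see that `(1, b) ∈ S`
forces `b = 1`, and symmetrically. If `b ≠ 1`, some amalgamation try separates `b` through a
compatible `F` on `G₃`. Transported along `f₀`, the same try is one for the primed amalgam, and
its compatible `F'` agrees with `F` on the generators of `S` up to the bijection `Φ` of triples.
Hence `Φ ∘ F' a = F b ∘ Φ` for all `(a, b) ∈ S`, and `a = 1` gives `F b = id`.
-/

open Function

section RightAction

variable {G G' α β : Type*} [Group G] [Group G']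

def IsRightAction (F : G → α → α) : Prop :=
  F 1 = id ∧ ∀ a b : G, F (a * b) = F b ∘ F a

namespace IsRightAction

variable {F : G → α → α}

theorem leftInverse_inv (hF : IsRightAction F) (a : G) : LeftInverse (F a⁻¹) (F a) :=
  congrFun (show F a⁻¹ ∘ F a = id by rw [← hF.2, mul_inv_cancel, hF.1])

theorem rightInverse_inv (hF : IsRightAction F) (a : G) : RightInverse (F a⁻¹) (F a) :=
  congrFun (show F a ∘ F a⁻¹ = id by rw [← hF.2, inv_mul_cancel, hF.1])

theorem semiconj_of_mem_closure {F' : G' → β → β} (hF : IsRightAction F)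
    (hF' : IsRightAction F') {Φ : β → α} {s : Set (G' × G)}
    (hs : ∀ q ∈ s, Semiconj Φ (F' q.1) (F q.2)) {q : G' × G} (hq : q ∈ Subgroup.closure s) :
    Semiconj Φ (F' q.1) (F q.2) := by
  induction hq using Subgroup.closure_induction with
  | mem q hq => exact hs q hq
  | one => rw [Prod.fst_one, Prod.snd_one, hF.1, hF'.1]; exact Semiconj.id_right
  | mul q r _ _ ihq ihr =>
    rw [Prod.fst_mul, Prod.snd_mul, hF.2, hF'.2]
    exact ihr.comp_right ihq
  | inv q _ ihq =>
    exact ihq.inverses_right (hF'.rightInverse_inv q.1) (hF.leftInverse_inv q.2)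

end IsRightAction

end RightAction

theorem CompatAt.isRightAction {G₀ G₁ G₂ G₃ H₁ H₂ : Type u}
    [Group G₀] [Group G₁] [Group G₂] [Group G₃] [Group H₁] [Group H₂]
    {ι₁ : G₀ →* G₁} {ι₂ : G₀ →* G₂} {e₁ : G₁ →* G₃} {e₂ : G₂ →* G₃}
    {f₁ : G₁ →* H₁} {f₂ : G₂ →* H₂} {x : AmalgTry G₀ H₁ H₂ (f₁.comp ι₁) (f₂.comp ι₂)}
    {F : G₃ → (x.U → x.U)} (hF : CompatAt ι₁ ι₂ e₁ e₂ f₁ f₂ x F) : IsRightAction F :=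
  ⟨hF.1, hF.2.1⟩

namespace AmalgTry

variable {G₀ G₀' H₁ H₂ : Type u} [Group G₀] [Group G₀'] [Group H₁] [Group H₂]
  {κ₁ : G₀ →* H₁} {κ₂ : G₀ →* H₂} (x : AmalgTry G₀ H₁ H₂ κ₁ κ₂)

theorem j₁_decomp (g : H₁) (u : x.U) :
    (x.j₁ g u).1.2.1 * κ₁ (x.j₁ g u).1.1 = u.1.2.1 * κ₁ u.1.1 * g :=
  ((x.rep₁ (u.1.2.1 * κ₁ u.1.1 * g)).exists.choose_spec.2).choose_spec.symm

theorem j₂_decomp (g : H₂) (u : x.U) :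
    (x.j₂ g u).1.2.2 * κ₂ (x.j₂ g u).1.1 = u.1.2.2 * κ₂ u.1.1 * g :=
  ((x.rep₂ (u.1.2.2 * κ₂ u.1.1 * g)).exists.choose_spec.2).choose_spec.symm

theorem eq_of_decomp₁ (hκ₁ : Injective κ₁) {v w : x.U} (h₂ : v.1.2.2 = w.1.2.2)
    (h : v.1.2.1 * κ₁ v.1.1 = w.1.2.1 * κ₁ w.1.1) : v = w := by
  have h₁ : v.1.2.1 = w.1.2.1 :=
    (x.rep₁ _).unique ⟨v.2.1, v.1.1, rfl⟩ ⟨w.2.1, w.1.1, h⟩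
  rw [h₁] at h
  exact Subtype.ext (Prod.ext (hκ₁ (mul_left_cancel h)) (Prod.ext h₁ h₂))

theorem eq_of_decomp₂ (hκ₂ : Injective κ₂) {v w : x.U} (h₁ : v.1.2.1 = w.1.2.1)
    (h : v.1.2.2 * κ₂ v.1.1 = w.1.2.2 * κ₂ w.1.1) : v = w := by
  have h₂ : v.1.2.2 = w.1.2.2 :=
    (x.rep₂ _).unique ⟨v.2.2, v.1.1, rfl⟩ ⟨w.2.2, w.1.1, h⟩
  rw [h₂] at h
  exact Subtype.ext (Prod.ext (hκ₂ (mul_left_cancel h)) (Prod.ext h₁ h₂))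

def transport (f₀ : G₀' ≃* G₀) (κ₁' : G₀' →* H₁) (κ₂' : G₀' →* H₂)
    (hκ₁ : ∀ t, κ₁' t = κ₁ (f₀ t)) (hκ₂ : ∀ t, κ₂' t = κ₂ (f₀ t)) :
    AmalgTry G₀' H₁ H₂ κ₁' κ₂' where
  I₁ := x.I₁
  I₂ := x.I₂
  one₁ := x.one₁
  one₂ := x.one₂
  rep₁ g := by
    obtain ⟨r, ⟨hr, c, hg⟩, hu⟩ := x.rep₁ g
    exact ⟨r, ⟨hr, f₀.symm c, by simpa [hκ₁] using hg⟩,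
      fun r' ⟨hr', c', hg'⟩ => hu r' ⟨hr', f₀ c', by rwa [← hκ₁]⟩⟩
  rep₂ g := by
    obtain ⟨r, ⟨hr, c, hg⟩, hu⟩ := x.rep₂ g
    exact ⟨r, ⟨hr, f₀.symm c, by simpa [hκ₂] using hg⟩,
      fun r' ⟨hr', c', hg'⟩ => hu r' ⟨hr', f₀ c', by rwa [← hκ₂]⟩⟩

section Transport

variable (f₀ : G₀' ≃* G₀) (κ₁' : G₀' →* H₁) (κ₂' : G₀' →* H₂)
  (hκ₁ : ∀ t, κ₁' t = κ₁ (f₀ t)) (hκ₂ : ∀ t, κ₂' t = κ₂ (f₀ t))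

def transportEquiv : (x.transport f₀ κ₁' κ₂' hκ₁ hκ₂).U ≃ x.U where
  toFun u := ⟨(f₀ u.1.1, u.1.2), u.2⟩
  invFun u := ⟨(f₀.symm u.1.1, u.1.2), u.2⟩
  left_inv u := by simp
  right_inv u := by simp

theorem semiconj_transportEquiv_j₁ (hinj : Injective κ₁) (g : H₁) :
    Semiconj (x.transportEquiv f₀ κ₁' κ₂' hκ₁ hκ₂)
      ((x.transport f₀ κ₁' κ₂' hκ₁ hκ₂).j₁ g) (x.j₁ g) := fun u =>
  x.eq_of_decomp₁ hinj rfl <| by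
    have h := (x.transport f₀ κ₁' κ₂' hκ₁ hκ₂).j₁_decomp g u
    rw [hκ₁, hκ₁] at h
    exact h.trans (x.j₁_decomp g (x.transportEquiv f₀ κ₁' κ₂' hκ₁ hκ₂ u)).symm

theorem semiconj_transportEquiv_j₂ (hinj : Injective κ₂) (g : H₂) :
    Semiconj (x.transportEquiv f₀ κ₁' κ₂' hκ₁ hκ₂)
      ((x.transport f₀ κ₁' κ₂' hκ₁ hκ₂).j₂ g) (x.j₂ g) := fun u =>
  x.eq_of_decomp₂ hinj rfl <| by
    have h := (x.transport f₀ κ₁' κ₂' hκ₁ hκ₂).j₂_decomp g u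
    rw [hκ₂, hκ₂] at h
    exact h.trans (x.j₂_decomp g (x.transportEquiv f₀ κ₁' κ₂' hκ₁ hκ₂ u)).symm

end Transport

end AmalgTry

theorem Subgroup.bijective_comp_subtype {A C : Type*} [Group A] [Group C] {S : Subgroup A}
    {φ : A →* C} (hmap : S.map φ = ⊤) (hker : ∀ p ∈ S, φ p = 1 → p = 1) :
    Bijective (φ ∘ S.subtype) := by
  refine ⟨(injective_iff_map_eq_one (φ.comp S.subtype)).mpr fun p hp =>
    Subtype.ext (hker p p.2 hp), fun c => ?_⟩
  obtain ⟨p, hp, rfl⟩ := (Subgroup.mem_map (f := φ)).mp (hmap ▸ Subgroup.mem_top c)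
  exact ⟨⟨p, hp⟩, rfl⟩

section AmalgGraph

variable {G₁ G₂ G₃ G₁' G₂' G₃' : Type*} [Group G₁] [Group G₂] [Group G₃]
  [Group G₁'] [Group G₂'] [Group G₃'] (e₁' : G₁' →* G₃') (e₂' : G₂' →* G₃')
  (e₁ : G₁ →* G₃) (e₂ : G₂ →* G₃)

def amalgGraph (f₁ : G₁' →* G₁) (f₂ : G₂' →* G₂) : Subgroup (G₃' × G₃) :=
  Subgroup.closure
    (Set.range (fun z => (e₁' z, e₁ (f₁ z))) ∪ Set.range (fun z => (e₂' z, e₂ (f₂ z))))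

variable {e₁' e₂' e₁ e₂}

theorem mk_mem_amalgGraph_left {f₁ : G₁' →* G₁} (f₂ : G₂' →* G₂) (z : G₁') :
    (e₁' z, e₁ (f₁ z)) ∈ amalgGraph e₁' e₂' e₁ e₂ f₁ f₂ :=
  Subgroup.subset_closure (Or.inl ⟨z, rfl⟩)

theorem mk_mem_amalgGraph_right (f₁ : G₁' →* G₁) {f₂ : G₂' →* G₂} (z : G₂') :
    (e₂' z, e₂ (f₂ z)) ∈ amalgGraph e₁' e₂' e₁ e₂ f₁ f₂ :=
  Subgroup.subset_closure (Or.inr ⟨z, rfl⟩)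

theorem map_fst_amalgGraph (f₁ : G₁' →* G₁) (f₂ : G₂' →* G₂) :
    (amalgGraph e₁' e₂' e₁ e₂ f₁ f₂).map (MonoidHom.fst G₃' G₃) =
      Subgroup.closure (Set.range e₁' ∪ Set.range e₂') := by
  rw [amalgGraph, MonoidHom.map_closure, Set.image_union, ← Set.range_comp, ← Set.range_comp]
  rfl

theorem map_prodComm_amalgGraph (f₁ : G₁' ≃* G₁) (f₂ : G₂' ≃* G₂) :
    (amalgGraph e₁' e₂' e₁ e₂ f₁ f₂).map (MulEquiv.prodComm : G₃' × G₃ ≃* G₃ × G₃') =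
      amalgGraph e₁ e₂ e₁' e₂' (f₁.symm : G₁ →* G₁') (f₂.symm : G₂ →* G₂') := by
  rw [amalgGraph, amalgGraph, MonoidHom.map_closure, Set.image_union, ← Set.range_comp,
    ← Set.range_comp, ← f₁.symm.surjective.range_comp, ← f₂.symm.surjective.range_comp]
  simp [Function.comp_def]

theorem map_snd_amalgGraph (f₁ : G₁' ≃* G₁) (f₂ : G₂' ≃* G₂) :
    (amalgGraph e₁' e₂' e₁ e₂ f₁ f₂).map (MonoidHom.snd G₃' G₃) =
      Subgroup.closure (Set.range e₁ ∪ Set.range e₂) := by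
  rw [← map_fst_amalgGraph (e₁' := e₁) (e₂' := e₂) (e₁ := e₁') (e₂ := e₂')
      (f₁.symm : G₁ →* G₁') (f₂.symm : G₂ →* G₂'),
    ← map_prodComm_amalgGraph, Subgroup.map_map]
  rfl

end AmalgGraph

namespace NFfin

variable {G₀ G₁ G₂ G₃ : Type u} [Group G₀] [Group G₁] [Group G₂] [Group G₃]
  {ι₁ : G₀ →* G₁} {ι₂ : G₀ →* G₂} {e₁ : G₁ →* G₃} {e₂ : G₂ →* G₃}

theorem injective_ι₁ (h : NFfin G₀ G₁ G₂ G₃ ι₁ ι₂ e₁ e₂) : Injective ι₁ := h.1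

theorem injective_ι₂ (h : NFfin G₀ G₁ G₂ G₃ ι₁ ι₂ e₁ e₂) : Injective ι₂ := h.2.1

theorem closure_range_union_range (h : NFfin G₀ G₁ G₂ G₃ ι₁ ι₂ e₁ e₂) :
    Subgroup.closure (Set.range e₁ ∪ Set.range e₂) = ⊤ :=
  h.2.2.2.2.2.1

theorem exists_compatAt (h : NFfin G₀ G₁ G₂ G₃ ι₁ ι₂ e₁ e₂) (H₁ H₂ : Type u) [Group H₁]
    [Group H₂] (f₁ : G₁ →* H₁) (f₂ : G₂ →* H₂) (hf₁ : Injective f₁) (hf₂ : Injective f₂)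
    (hH₁ : IsLocallyFiniteGroup H₁) (hH₂ : IsLocallyFiniteGroup H₂)
    (x : AmalgTry G₀ H₁ H₂ (f₁.comp ι₁) (f₂.comp ι₂)) :
    ∃ F : G₃ → x.U → x.U, CompatAt ι₁ ι₂ e₁ e₂ f₁ f₂ x F :=
  h.2.2.2.2.2.2.1 H₁ H₂ f₁ f₂ hf₁ hf₂ hH₁ hH₂ x

theorem nonempty_sepWitness (h : NFfin G₀ G₁ G₂ G₃ ι₁ ι₂ e₁ e₂) {a : G₃} (ha : a ≠ 1) :
    Nonempty (SepWitness ι₁ ι₂ e₁ e₂ a) :=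
  h.2.2.2.2.2.2.2 a ha

variable {G₀' G₁' G₂' G₃' : Type u} [Group G₀'] [Group G₁'] [Group G₂'] [Group G₃']
  {ι₁' : G₀' →* G₁'} {ι₂' : G₀' →* G₂'} {e₁' : G₁' →* G₃'} {e₂' : G₂' →* G₃'}

theorem snd_eq_one_of_mem_amalgGraph (h : NFfin G₀ G₁ G₂ G₃ ι₁ ι₂ e₁ e₂)
    (h' : NFfin G₀' G₁' G₂' G₃' ι₁' ι₂' e₁' e₂') (f₀ : G₀' ≃* G₀) {f₁ : G₁' →* G₁}
    {f₂ : G₂' →* G₂} (hf₁inj : Injective f₁) (hf₂inj : Injective f₂)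
    (hf₁ : ∀ g, f₁ (ι₁' g) = ι₁ (f₀ g)) (hf₂ : ∀ g, f₂ (ι₂' g) = ι₂ (f₀ g))
    {p : G₃' × G₃} (hp : p ∈ amalgGraph e₁' e₂' e₁ e₂ f₁ f₂) (hp₁ : p.1 = 1) : p.2 = 1 := by
  by_contra hp₂
  obtain ⟨w⟩ := h.nonempty_sepWitness hp₂
  let _ := w.grp₁
  let _ := w.grp₂
  have hκ₁ (t : G₀') : ((w.f₁.comp f₁).comp ι₁') t = (w.f₁.comp ι₁) (f₀ t) :=
    congrArg w.f₁ (hf₁ t)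
  have hκ₂ (t : G₀') : ((w.f₂.comp f₂).comp ι₂') t = (w.f₂.comp ι₂) (f₀ t) :=
    congrArg w.f₂ (hf₂ t)
  set Φ := w.x.transportEquiv f₀ _ _ hκ₁ hκ₂
  obtain ⟨F', hF'⟩ := h'.exists_compatAt w.H₁ w.H₂ (w.f₁.comp f₁) (w.f₂.comp f₂)
    (w.inj₁.comp hf₁inj) (w.inj₂.comp hf₂inj) w.lf₁ w.lf₂ (w.x.transport f₀ _ _ hκ₁ hκ₂)
  have hΦ : Semiconj Φ (F' p.1) (w.F p.2) := by
    refine w.compat.isRightAction.semiconj_of_mem_closure hF'.isRightAction ?_ hp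
    rintro _ (⟨z, rfl⟩ | ⟨z, rfl⟩)
    · rw [hF'.2.2.1, w.compat.2.2.1]
      exact w.x.semiconj_transportEquiv_j₁ f₀ _ _ hκ₁ hκ₂ (w.inj₁.comp h.injective_ι₁) _
    · rw [hF'.2.2.2, w.compat.2.2.2]
      exact w.x.semiconj_transportEquiv_j₂ f₀ _ _ hκ₁ hκ₂ (w.inj₂.comp h.injective_ι₂) _
  rw [hp₁, hF'.1] at hΦ
  refine w.sep (funext fun v => ?_)
  obtain ⟨u, rfl⟩ := Φ.surjective v
  exact (hΦ u).symm

theorem fst_eq_one_of_mem_amalgGraph (h : NFfin G₀ G₁ G₂ G₃ ι₁ ι₂ e₁ e₂)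
    (h' : NFfin G₀' G₁' G₂' G₃' ι₁' ι₂' e₁' e₂') (f₀ : G₀' ≃* G₀) {f₁ : G₁' ≃* G₁}
    {f₂ : G₂' ≃* G₂} (hf₁ : ∀ g, f₁ (ι₁' g) = ι₁ (f₀ g)) (hf₂ : ∀ g, f₂ (ι₂' g) = ι₂ (f₀ g))
    {p : G₃' × G₃} (hp : p ∈ amalgGraph e₁' e₂' e₁ e₂ f₁ f₂) (hp₂ : p.2 = 1) : p.1 = 1 := by
  have hf₁' (g : G₀) : f₁.symm (ι₁ g) = ι₁' (f₀.symm g) := by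
    rw [MulEquiv.symm_apply_eq, hf₁, MulEquiv.apply_symm_apply]
  have hf₂' (g : G₀) : f₂.symm (ι₂ g) = ι₂' (f₀.symm g) := by
    rw [MulEquiv.symm_apply_eq, hf₂, MulEquiv.apply_symm_apply]
  have hp' : p.swap ∈ amalgGraph e₁ e₂ e₁' e₂' (f₁.symm : G₁ →* G₁') (f₂.symm : G₂ →* G₂') := by
    rw [← map_prodComm_amalgGraph]
    exact Subgroup.mem_map_of_mem _ hp
  exact h'.snd_eq_one_of_mem_amalgGraph h f₀.symm f₁.symm.injective f₂.symm.injective hf₁' hf₂'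
    hp' hp₂

theorem exists_mulEquiv_amalgGraph_eq_graph (h : NFfin G₀ G₁ G₂ G₃ ι₁ ι₂ e₁ e₂)
    (h' : NFfin G₀' G₁' G₂' G₃' ι₁' ι₂' e₁' e₂') (f₀ : G₀' ≃* G₀) (f₁ : G₁' ≃* G₁)
    (f₂ : G₂' ≃* G₂) (hf₁ : ∀ g, f₁ (ι₁' g) = ι₁ (f₀ g)) (hf₂ : ∀ g, f₂ (ι₂' g) = ι₂ (f₀ g)) :
    ∃ e : G₃' ≃* G₃, amalgGraph e₁' e₂' e₁ e₂ f₁ f₂ = e.toMonoidHom.graph := by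
  apply Subgroup.exists_mulEquiv_eq_graph
  · refine Subgroup.bijective_comp_subtype (φ := MonoidHom.fst G₃' G₃)
      (by rw [map_fst_amalgGraph, h'.closure_range_union_range]) fun p hp hp₁ => ?_
    exact Prod.ext hp₁
      (h.snd_eq_one_of_mem_amalgGraph h' f₀ f₁.injective f₂.injective hf₁ hf₂ hp hp₁)
  · refine Subgroup.bijective_comp_subtype (φ := MonoidHom.snd G₃' G₃)
      (by rw [map_snd_amalgGraph, h.closure_range_union_range]) fun p hp hp₂ => ?_
    exact Prod.ext (h.fst_eq_one_of_mem_amalgGraph h' f₀ hf₁ hf₂ hp hp₂) hp₂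

end NFfin

theorem stmt16_general {G₀ G₁ G₂ G₃ G₀' G₁' G₂' G₃' : Type u}
    [Group G₀] [Group G₁] [Group G₂] [Group G₃]
    [Group G₀'] [Group G₁'] [Group G₂'] [Group G₃']
    (ι₁ : G₀ →* G₁) (ι₂ : G₀ →* G₂) (e₁ : G₁ →* G₃) (e₂ : G₂ →* G₃)
    (ι₁' : G₀' →* G₁') (ι₂' : G₀' →* G₂') (e₁' : G₁' →* G₃') (e₂' : G₂' →* G₃')
    (h : NFfin G₀ G₁ G₂ G₃ ι₁ ι₂ e₁ e₂)
    (h' : NFfin G₀' G₁' G₂' G₃' ι₁' ι₂' e₁' e₂')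
    (f₀ : G₀' ≃* G₀) (f₁ : G₁' ≃* G₁) (f₂ : G₂' ≃* G₂)
    (hf₁ : ∀ g : G₀', f₁ (ι₁' g) = ι₁ (f₀ g))
    (hf₂ : ∀ g : G₀', f₂ (ι₂' g) = ι₂ (f₀ g)) :
    ∃ f₃ : G₃' →* G₃,
      (∀ x : G₁', f₃ (e₁' x) = e₁ (f₁ x)) ∧
      (∀ y : G₂', f₃ (e₂' y) = e₂ (f₂ y)) ∧
      Function.Injective f₃ ∧ Function.Surjective f₃ ∧
      (∀ g : G₃' →* G₃,
        (∀ x : G₁', g (e₁' x) = e₁ (f₁ x)) →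
        (∀ y : G₂', g (e₂' y) = e₂ (f₂ y)) → g = f₃) := by
  obtain ⟨e, he⟩ := h.exists_mulEquiv_amalgGraph_eq_graph h' f₀ f₁ f₂ hf₁ hf₂
  have he₁ (z : G₁') : e (e₁' z) = e₁ (f₁ z) :=
    MonoidHom.mem_graph.mp (he ▸ mk_mem_amalgGraph_left _ z)
  have he₂ (z : G₂') : e (e₂' z) = e₂ (f₂ z) :=
    MonoidHom.mem_graph.mp (he ▸ mk_mem_amalgGraph_right _ z)
  refine ⟨e, he₁, he₂, e.injective, e.surjective, fun g hg₁ hg₂ => ?_⟩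
  refine MonoidHom.eq_of_eqOn_dense h'.closure_range_union_range ?_
  rintro _ (⟨z, rfl⟩ | ⟨z, rfl⟩)
  · exact (hg₁ z).trans (he₁ z).symm
  · exact (hg₂ z).trans (he₂ z).symm

/-- Uniqueness of the stable amalgam of finite groups: given
`NF_fin(G₀,G₁,G₂,G₃)` and `NF_fin(G₀',G₁',G₂',G₃')` and isomorphisms
`f₀ : G₀' ≅ G₀`, `f₁ : G₁' ≅ G₁`, `f₂ : G₂' ≅ G₂` compatible with the
inclusions (i.e. `f₁`, `f₂` agree on `G₀'`), there is a unique embedding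
`f₃ : G₃' → G₃` extending `f₁ ∪ f₂`; it is onto since `G₃ = ⟨G₁ ∪ G₂⟩`. -/
theorem stmt16 {G₀ G₁ G₂ G₃ G₀' G₁' G₂' G₃' : Type u}
    [Group G₀] [Group G₁] [Group G₂] [Group G₃]
    [Group G₀'] [Group G₁'] [Group G₂'] [Group G₃']
    [Finite G₀] [Finite G₁] [Finite G₂] [Finite G₃]
    [Finite G₀'] [Finite G₁'] [Finite G₂'] [Finite G₃']
    (ι₁ : G₀ →* G₁) (ι₂ : G₀ →* G₂) (e₁ : G₁ →* G₃) (e₂ : G₂ →* G₃)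
    (ι₁' : G₀' →* G₁') (ι₂' : G₀' →* G₂') (e₁' : G₁' →* G₃') (e₂' : G₂' →* G₃')
    (h : NFfin G₀ G₁ G₂ G₃ ι₁ ι₂ e₁ e₂)
    (h' : NFfin G₀' G₁' G₂' G₃' ι₁' ι₂' e₁' e₂')
    (f₀ : G₀' ≃* G₀) (f₁ : G₁' ≃* G₁) (f₂ : G₂' ≃* G₂)
    (hf₁ : ∀ g : G₀', f₁ (ι₁' g) = ι₁ (f₀ g))
    (hf₂ : ∀ g : G₀', f₂ (ι₂' g) = ι₂ (f₀ g)) :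
    ∃ f₃ : G₃' →* G₃,
      (∀ x : G₁', f₃ (e₁' x) = e₁ (f₁ x)) ∧
      (∀ y : G₂', f₃ (e₂' y) = e₂ (f₂ y)) ∧
      Function.Injective f₃ ∧ Function.Surjective f₃ ∧
      (∀ g : G₃' →* G₃,
        (∀ x : G₁', g (e₁' x) = e₁ (f₁ x)) →
        (∀ y : G₂', g (e₂' y) = e₂ (f₂ y)) → g = f₃) :=
  stmt16_general ι₁ ι₂ e₁ e₂ ι₁' ι₂' e₁' e₂' h h' f₀ f₁ f₂ hf₁ hf₂
end
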